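/- arXiv:2602.20585 — 9 statements merged into one kernel-verified Lean document; each statement's English description precedes it below -/
import Mathlib

section
/- Let U be a family of probability measures on a measurable space X with envelope μ_U(A) = sup_{μ∈U} μ(A). For ε ∈ (0,1], define the ε-fragmentation number N_U(ε) as the supremum over k of the existence of k pairwise disjoint measurable sets A_1,…,A_k with μ_U(A_i) ≥ ε for all i. Then μ_U is continuous from above at the empty set (i.e., for every decreasing sequence of measurable sets A_n with empty intersection, μ_U(A_n) → 0) if and only if N_U(ε) is finite for every ε > 0. -/
open MeasureTheory Set Filter ENNReal

open Function Topology

/-! If `N_U(ε) = ∞`, a greedy construction gives sets `C n` and measures `ν n ∈ U` with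
`ν n (C n) ≥ c` while every earlier `ν j` gives `C n` mass at most `δ n`, where `∑ δ n < c / 2`:
among many disjoint sets of envelope `≥ ε`, one is small for the finite measure `∑_{j<n} ν j`.
Removing from each `C j` the later sets leaves disjoint sets of envelope `≥ c / 2`, whose tails
decrease to `∅` with envelope bounded below. Conversely, if the envelope of a decreasing sequence
with empty intersection stays above `ε`, continuity of each single measure lets us cut the
sequence into arbitrarily many disjoint slices `A (g j) \ A (g (j + 1))` of envelope `≥ ε`. -/

section

variable {X : Type*} [MeasurableSpace X] {U : Set (Measure X)}

noncomputable def upperEnvelope (U : Set (Measure X)) (s : Set X) : ℝ≥0∞ := ⨆ μ ∈ U, μ s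

section UpperEnvelope

variable {s t : Set X} {c : ℝ≥0∞}

lemma le_upperEnvelope {μ : Measure X} (hμ : μ ∈ U) (s : Set X) : μ s ≤ upperEnvelope U s :=
  le_biSup (fun μ : Measure X => μ s) hμ

lemma upperEnvelope_mono (h : s ⊆ t) : upperEnvelope U s ≤ upperEnvelope U t :=
  iSup₂_mono fun _ _ => measure_mono h

lemma lt_upperEnvelope_iff : c < upperEnvelope U s ↔ ∃ μ ∈ U, c < μ s := by
  simp only [upperEnvelope, lt_iSup_iff, exists_prop]

end UpperEnvelope

lemma Antitone.pairwise_disjoint_on_sdiff_succ {α : Type*} {A : ℕ → Set α} (hA : Antitone A) :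
    Pairwise (Disjoint on fun n => A n \ A (n + 1)) :=
  (pairwise_disjoint_on _).2 fun _ _ hij => disjoint_left.2 fun _ hi hj => hi.2 (hA hij hj.1)

lemma pairwise_disjoint_on_sdiff_iUnion_gt {α : Type*} (C : ℕ → Set α) :
    Pairwise (Disjoint on fun j => C j \ ⋃ n > j, C n) :=
  (pairwise_disjoint_on _).2 fun _ _ hij =>
    disjoint_left.2 fun _ hi hj => hi.2 (mem_biUnion hij hj.1)

lemma iInter_iUnion_ge_eq_empty_of_pairwise_disjoint {α : Type*} {D : ℕ → Set α}
    (hD : Pairwise (Disjoint on D)) : ⋂ n, ⋃ k ≥ n, D k = ∅ := by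
  refine eq_empty_of_forall_notMem fun x hx => ?_
  simp only [mem_iInter, mem_iUnion, exists_prop] at hx
  obtain ⟨k, -, hk⟩ := hx 0
  obtain ⟨l, hkl, hl⟩ := hx (k + 1)
  exact disjoint_left.1 (hD (by omega : k ≠ l)) hk hl

lemma exists_card_mul_measure_le_measure_univ {ι : Type*} [Fintype ι] [Nonempty ι] (ν : Measure X)
    {B : ι → Set X} (hB : ∀ i, MeasurableSet (B i)) (hdisj : Pairwise (Disjoint on B)) :
    ∃ i, Fintype.card ι * ν (B i) ≤ ν univ := by
  obtain ⟨i, hi⟩ := Finite.exists_min fun i => ν (B i)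
  refine ⟨i, ?_⟩
  calc (Fintype.card ι : ℝ≥0∞) * ν (B i) = ∑ _j : ι, ν (B i) := by simp
    _ ≤ ∑ j, ν (B j) := Finset.sum_le_sum fun j _ => hi j
    _ = ν (⋃ j, B j) := by rw [measure_iUnion hdisj hB, tsum_fintype]
    _ ≤ ν univ := measure_mono (subset_univ _)

lemma exists_lt_measure_sdiff {μ : Measure X} [IsFiniteMeasure μ] {A : ℕ → Set X}
    (hAm : ∀ n, MeasurableSet (A n)) (hA : Antitone A) (hAempty : ⋂ n, A n = ∅) {c : ℝ≥0∞}
    {n : ℕ} (hc : c < μ (A n)) : ∃ m ≥ n, c < μ (A n \ A m) := by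
  have hlim : Tendsto (μ ∘ A) atTop (𝓝 0) := by
    simpa [hAempty] using tendsto_measure_iInter_atTop (fun m => (hAm m).nullMeasurableSet) hA
      ⟨0, measure_ne_top μ _⟩
  obtain ⟨m, hm, hnm⟩ :=
    ((hlim.eventually_lt_const (tsub_pos_of_lt hc)).and (eventually_ge_atTop n)).exists
  refine ⟨m, hnm, lt_of_lt_of_le ?_ le_measure_sdiff⟩
  exact lt_tsub_iff_right.2 (lt_tsub_iff_left.1 hm)

lemma exists_measure_le_of_forall_exists_disjoint {ε : ℝ≥0∞}
    (hfam : ∀ k : ℕ, ∃ (m : ℕ) (B : Fin m → Set X), (∀ i, MeasurableSet (B i)) ∧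
      Pairwise (Disjoint on B) ∧ (∀ i, ε ≤ upperEnvelope U (B i)) ∧ k < m)
    (S : Measure X) [IsFiniteMeasure S] {δ : ℝ≥0∞} (hδ : δ ≠ 0) :
    ∃ C, MeasurableSet C ∧ ε ≤ upperEnvelope U C ∧ S C ≤ δ := by
  obtain ⟨k, hk⟩ := ENNReal.exists_nat_mul_gt hδ (measure_ne_top S univ)
  obtain ⟨m, B, hBm, hdisj, hBε, hkm⟩ := hfam k
  have : Nonempty (Fin m) := ⟨⟨k, hkm⟩⟩
  obtain ⟨i, hi⟩ := exists_card_mul_measure_le_measure_univ S hBm hdisj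
  refine ⟨B i, hBm i, hBε i, ?_⟩
  have hm : (m : ℝ≥0∞) ≠ 0 := by exact_mod_cast (Nat.zero_lt_of_lt hkm).ne'
  refine (ENNReal.mul_le_mul_iff_right hm (natCast_ne_top m)).1 ?_
  calc (m : ℝ≥0∞) * S (B i) ≤ S univ := by simpa using hi
    _ ≤ k * δ := hk.le
    _ ≤ m * δ := by gcongr

lemma exists_seq_forall_lt_measure_le (hU : ∀ μ ∈ U, IsFiniteMeasure μ)
    {c : ℝ≥0∞} {δ : ℕ → ℝ≥0∞}
    (hstep : ∀ n (S : Measure X), IsFiniteMeasure S →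
      ∃ C, ∃ ν ∈ U, MeasurableSet C ∧ c ≤ ν C ∧ S C ≤ δ n) :
    ∃ (C : ℕ → Set X) (ν : ℕ → Measure X), (∀ n, ν n ∈ U) ∧ (∀ n, MeasurableSet (C n)) ∧
      (∀ n, c ≤ ν n (C n)) ∧ ∀ j n, j < n → ν j (C n) ≤ δ n := by
  choose! C ν hνU hC hc hS using hstep
  -- `S n = ν 0 + ⋯ + ν (n - 1)`, so making `S n (C n)` small bounds every earlier `ν j (C n)`
  let S : ℕ → Measure X := fun n =>
    Nat.rec (motive := fun _ => Measure X) 0 (fun n S => S + ν n S) n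
  have hS_succ (n : ℕ) : S (n + 1) = S n + ν n (S n) := rfl
  have hS_fin (n : ℕ) : IsFiniteMeasure (S n) := by
    induction n with
    | zero => exact inferInstanceAs (IsFiniteMeasure (0 : Measure X))
    | succ n ih =>
      have := hU _ (hνU n _ ih)
      rw [hS_succ]
      infer_instance
  have hν_le_S {j n : ℕ} (hjn : j < n) : ν j (S j) ≤ S n := by
    induction n with
    | zero => omega
    | succ n ih =>
      rw [hS_succ]
      rcases Nat.lt_succ_iff_lt_or_eq.1 hjn with h | rfl
      · exact Measure.le_add_right (ih h)
      · exact Measure.le_add_left le_rfl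
  exact ⟨fun n => C n (S n), fun n => ν n (S n), fun n => hνU n _ (hS_fin n),
    fun n => hC n _ (hS_fin n), fun n => hc n _ (hS_fin n),
    fun j n hjn => (hν_le_S hjn _).trans (hS n _ (hS_fin n))⟩

lemma exists_disjoint_seq_of_forall_exists_disjoint (hU : ∀ μ ∈ U, IsFiniteMeasure μ)
    {ε : ℝ≥0∞} (hε : 0 < ε)
    (hfam : ∀ k : ℕ, ∃ (m : ℕ) (B : Fin m → Set X), (∀ i, MeasurableSet (B i)) ∧
      Pairwise (Disjoint on B) ∧ (∀ i, ε ≤ upperEnvelope U (B i)) ∧ k < m) :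
    ∃ c > 0, ∃ D : ℕ → Set X, (∀ n, MeasurableSet (D n)) ∧ Pairwise (Disjoint on D) ∧
      ∀ n, c ≤ upperEnvelope U (D n) := by
  obtain ⟨c, hc0, hcε⟩ := exists_between hε
  obtain ⟨δ, hδ0, hδc⟩ := ENNReal.exists_pos_sum_of_countable' (ENNReal.half_pos hc0.ne').ne' ℕ
  obtain ⟨C, ν, hνU, hCm, hcν, hνC⟩ := exists_seq_forall_lt_measure_le hU
    (c := c) (δ := δ) fun n S _ => by
      obtain ⟨C, hCm, hεC, hSC⟩ := exists_measure_le_of_forall_exists_disjoint hfam S (hδ0 n).ne'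
      obtain ⟨ν, hν, hcν⟩ := lt_upperEnvelope_iff.1 (hcε.trans_le hεC)
      exact ⟨C, ν, hν, hCm, hcν.le, hSC⟩
  refine ⟨c / 2, ENNReal.half_pos hc0.ne', fun j => C j \ ⋃ n > j, C n,
    fun j => (hCm j).diff (.biUnion (to_countable _) fun n _ => hCm n),
    pairwise_disjoint_on_sdiff_iUnion_gt C, fun j => ?_⟩
  have htail : ν j (⋃ n > j, C n) ≤ c / 2 :=
    calc ν j (⋃ n > j, C n) ≤ ∑' n : Ioi j, ν j (C n) := measure_biUnion_le _ (to_countable _) _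
      _ ≤ ∑' n : Ioi j, δ n := ENNReal.tsum_le_tsum fun n => hνC j n n.2
      _ ≤ ∑' n, δ n := ENNReal.tsum_comp_le_tsum_of_injective Subtype.val_injective δ
      _ ≤ c / 2 := hδc.le
  calc c / 2 = c - c / 2 := (ENNReal.sub_half (ne_top_of_lt hcε)).symm
    _ ≤ ν j (C j) - ν j (⋃ n > j, C n) := tsub_le_tsub (hcν j) htail
    _ ≤ ν j (C j \ ⋃ n > j, C n) := le_measure_sdiff
    _ ≤ upperEnvelope U (C j \ ⋃ n > j, C n) := le_upperEnvelope (hνU j) _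

lemma eq_zero_of_forall_le_upperEnvelope_of_pairwise_disjoint
    (hcont : ∀ A : ℕ → Set X, (∀ n, MeasurableSet (A n)) → Antitone A → ⋂ n, A n = ∅ →
      Tendsto (fun n => upperEnvelope U (A n)) atTop (𝓝 0))
    {D : ℕ → Set X} (hDm : ∀ n, MeasurableSet (D n)) (hdisj : Pairwise (Disjoint on D))
    {c : ℝ≥0∞} (hc : ∀ n, c ≤ upperEnvelope U (D n)) : c = 0 := by
  have hlim := hcont (fun n => ⋃ k ≥ n, D k)
    (fun n => .biUnion (to_countable _) fun k _ => hDm k)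
    (fun m n hmn => biUnion_mono (fun k hk => le_trans hmn hk) fun _ _ => subset_rfl)
    (iInter_iUnion_ge_eq_empty_of_pairwise_disjoint hdisj)
  refine nonpos_iff_eq_zero.1 (ge_of_tendsto' hlim fun n => (hc n).trans ?_)
  exact upperEnvelope_mono (subset_biUnion_of_mem (u := D) (le_refl n))

lemma exists_monotone_le_upperEnvelope_sdiff (hU : ∀ μ ∈ U, IsFiniteMeasure μ)
    {A : ℕ → Set X} (hAm : ∀ n, MeasurableSet (A n)) (hA : Antitone A) (hAempty : ⋂ n, A n = ∅)
    {ε : ℝ≥0∞} (hε : ∀ n, ε < upperEnvelope U (A n)) :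
    ∃ g : ℕ → ℕ, Monotone g ∧ ∀ j, ε ≤ upperEnvelope U (A (g j) \ A (g (j + 1))) := by
  have hstep (n : ℕ) : ∃ m ≥ n, ε ≤ upperEnvelope U (A n \ A m) := by
    obtain ⟨μ, hμ, hεμ⟩ := lt_upperEnvelope_iff.1 (hε n)
    have := hU μ hμ
    obtain ⟨m, hnm, hεm⟩ := exists_lt_measure_sdiff hAm hA hAempty hεμ
    exact ⟨m, hnm, hεm.le.trans (le_upperEnvelope hμ _)⟩
  choose f hf hfε using hstep
  have hg_succ (j : ℕ) : f^[j + 1] 0 = f (f^[j] 0) := iterate_succ_apply' f j 0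
  refine ⟨fun j => f^[j] 0, monotone_nat_of_le_succ fun j => ?_, fun j => ?_⟩
  · simpa only [hg_succ] using hf (f^[j] 0)
  · simpa only [hg_succ] using hfε (f^[j] 0)

end

theorem stmt2_general {X : Type*} [MeasurableSpace X] (U : Set (Measure X))
    (hprob : ∀ μ ∈ U, IsProbabilityMeasure μ) :
    (∀ A : ℕ → Set X, (∀ n, MeasurableSet (A n)) → Antitone A → (⋂ n, A n) = ∅ →
      Tendsto (fun n => ⨆ μ ∈ U, μ (A n)) atTop (nhds 0)) ↔
    (∀ ε : ℝ≥0∞, 0 < ε → ∃ k : ℕ, ∀ (m : ℕ) (B : Fin m → Set X),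
      (∀ i, MeasurableSet (B i)) → Pairwise (Function.onFun Disjoint B) →
      (∀ i, ε ≤ ⨆ μ ∈ U, μ (B i)) → m ≤ k) := by
  have hU : ∀ μ ∈ U, IsFiniteMeasure μ := fun μ hμ => have := hprob μ hμ; inferInstance
  constructor
  · intro hcont
    by_contra! hfrag
    obtain ⟨ε, hε, hfam⟩ := hfrag
    obtain ⟨c, hc, D, hDm, hdisj, hcD⟩ := exists_disjoint_seq_of_forall_exists_disjoint hU hε hfam
    exact hc.ne' (eq_zero_of_forall_le_upperEnvelope_of_pairwise_disjoint hcont hDm hdisj hcD)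
  · intro hfrag A hAm hA hAempty
    have hA_env : Antitone fun n => upperEnvelope U (A n) := fun _ _ h => upperEnvelope_mono (hA h)
    by_contra hlim
    obtain ⟨ε, hε, hεA⟩ : ∃ ε > 0, ε < ⨅ n, upperEnvelope U (A n) :=
      exists_between (pos_iff_ne_zero.2 fun h => hlim (h ▸ tendsto_atTop_iInf hA_env))
    obtain ⟨g, hg, hgε⟩ := exists_monotone_le_upperEnvelope_sdiff hU hAm hA hAempty
      fun n => hεA.trans_le (iInf_le _ n)
    obtain ⟨k, hk⟩ := hfrag ε hε
    have := hk (k + 1) (fun i => A (g i) \ A (g (i + 1))) (fun i => (hAm _).diff (hAm _))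
      ((hA.comp_monotone hg).pairwise_disjoint_on_sdiff_succ.comp_of_injective Fin.val_injective)
      fun i => hgε i
    omega

theorem stmt2 {X : Type*} [MeasurableSpace X] (U : Set (Measure X)) (hU : U.Nonempty)
    (hprob : ∀ μ ∈ U, IsProbabilityMeasure μ) :
    (∀ A : ℕ → Set X, (∀ n, MeasurableSet (A n)) → Antitone A → (⋂ n, A n) = ∅ →
      Tendsto (fun n => ⨆ μ ∈ U, μ (A n)) atTop (nhds 0)) ↔
    (∀ ε : ℝ≥0∞, 0 < ε → ∃ k : ℕ, ∀ (m : ℕ) (B : Fin m → Set X),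
      (∀ i, MeasurableSet (B i)) → Pairwise (Function.onFun Disjoint B) →
      (∀ i, ε ≤ ⨆ μ ∈ U, μ (B i)) → m ≤ k) :=
  stmt2_general U hprob
end

section
/- Let U be a family of probability measures on a measurable space X whose envelope μ_U(A) = sup_{μ∈U} μ(A) fails to be continuous from above at the empty set. Then there exist ε > 0 and a countably infinite sequence (A_i)_{i≥1} of pairwise disjoint measurable sets such that μ_U(A_i) ≥ ε for all i. -/
open MeasureTheory Set Filter ENNReal

/-!
The envelope `f n := sup_{μ ∈ U} μ (B n)` decreases, and since it does not tend to `0` there is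
`ε > 0` with `ε < f n` for every `n`. Given `n`, some `μ ∈ U` has `ε < μ (B n)`; as `m → ∞` the
sets `B n \ B m` increase to `B n`, so continuity from below gives `m ≥ n` with
`ε < μ (B n \ B m)`. Iterating `n ↦ m` from `0` produces indices `n₀ ≤ n₁ ≤ ⋯`, and the shells
`B nₖ \ B nₖ₊₁` are pairwise disjoint, each of envelope mass at least `ε`.
-/

theorem ENNReal.exists_pos_forall_lt_of_antitone_of_not_tendsto_zero {f : ℕ → ℝ≥0∞}
    (hf : Antitone f) (h : ¬ Tendsto f atTop (nhds 0)) : ∃ ε, 0 < ε ∧ ∀ n, ε < f n := by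
  have hpos : 0 < ⨅ n, f n := by
    refine pos_iff_ne_zero.mpr fun h0 => h ?_
    simpa only [h0] using tendsto_atTop_iInf hf
  obtain ⟨ε, hε0, hε⟩ := exists_between hpos
  exact ⟨ε, hε0, fun n => hε.trans_le (iInf_le f n)⟩

theorem Antitone.pairwise_disjoint_sdiff_comp {α : Type*} {B : ℕ → Set α} (hB : Antitone B)
    {n : ℕ → ℕ} (hn : Monotone n) :
    Pairwise (Function.onFun Disjoint fun k => B (n k) \ B (n (k + 1))) :=
  (pairwise_disjoint_on _).mpr fun _ _ hij =>
    Set.disjoint_left.mpr fun _ hxi hxj => hxi.2 (hB (hn hij) hxj.1)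

theorem Antitone.exists_pairwise_disjoint_of_forall_exists_sdiff {α : Type*} {B : ℕ → Set α}
    (hB : Antitone B) {P : Set α → Prop} (h : ∀ n, ∃ m, n ≤ m ∧ P (B n \ B m)) :
    ∃ A : ℕ → Set α, Pairwise (Function.onFun Disjoint A) ∧ ∀ k, P (A k) := by
  choose next hle hP using h
  have hsucc : ∀ k, next^[k + 1] 0 = next (next^[k] 0) := fun k =>
    Function.iterate_succ_apply' next k 0
  have hmono : Monotone fun k => next^[k] 0 :=
    monotone_nat_of_le_succ fun k => (hsucc k).symm ▸ hle _
  refine ⟨fun k => B (next^[k] 0) \ B (next^[k + 1] 0), hB.pairwise_disjoint_sdiff_comp hmono,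
    fun k => ?_⟩
  simpa only [hsucc] using hP (next^[k] 0)

theorem MeasureTheory.Measure.exists_lt_measure_sdiff {α : Type*} [MeasurableSpace α]
    (μ : Measure α) {B : ℕ → Set α} (hB : Antitone B) (hB0 : ⋂ n, B n = ∅) {ε : ℝ≥0∞} {n : ℕ}
    (hε : ε < μ (B n)) : ∃ m, n ≤ m ∧ ε < μ (B n \ B m) := by
  have hmono : Monotone fun m => B n \ B m := fun _ _ hm => sdiff_subset_sdiff_right (hB hm)
  have hunion : ⋃ m, B n \ B m = B n := by rw [← sdiff_iInter, hB0, sdiff_empty]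
  have htend := tendsto_measure_iUnion_atTop (μ := μ) hmono
  rw [hunion] at htend
  exact ((htend.eventually_const_lt hε).and (eventually_ge_atTop n)).exists.imp
    fun m hm => ⟨hm.2, hm.1⟩

theorem stmt3_general {X : Type*} [MeasurableSpace X] (U : Set (Measure X))
    (hfail : ∃ B : ℕ → Set X, (∀ n, MeasurableSet (B n)) ∧ Antitone B ∧ (⋂ n, B n) = ∅ ∧
      ¬ Tendsto (fun n => ⨆ μ ∈ U, μ (B n)) atTop (nhds 0)) :
    ∃ ε : ℝ≥0∞, 0 < ε ∧ ∃ A : ℕ → Set X, (∀ i, MeasurableSet (A i)) ∧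
      Pairwise (Function.onFun Disjoint A) ∧ ∀ i, ε ≤ ⨆ μ ∈ U, μ (A i) := by
  obtain ⟨B, hBm, hB, hB0, hnot⟩ := hfail
  have henv_anti : Antitone fun n => ⨆ μ ∈ U, μ (B n) := fun _ _ hmn =>
    iSup₂_mono fun μ _ => measure_mono (hB hmn)
  obtain ⟨ε, hε0, hε⟩ :=
    ENNReal.exists_pos_forall_lt_of_antitone_of_not_tendsto_zero henv_anti hnot
  have hshell : ∀ n, ∃ m, n ≤ m ∧ (MeasurableSet (B n \ B m) ∧ ε ≤ ⨆ μ ∈ U, μ (B n \ B m)) := by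
    intro n
    obtain ⟨μ, hμU, hμ⟩ := lt_biSup_iff.mp (hε n)
    obtain ⟨m, hnm, hm⟩ := μ.exists_lt_measure_sdiff hB hB0 hμ
    exact ⟨m, hnm, (hBm n).diff (hBm m), hm.le.trans (le_biSup (fun ν => ν (B n \ B m)) hμU)⟩
  obtain ⟨A, hdisj, hA⟩ := hB.exists_pairwise_disjoint_of_forall_exists_sdiff
    (P := fun S => MeasurableSet S ∧ ε ≤ ⨆ μ ∈ U, μ S) hshell
  exact ⟨ε, hε0, A, fun i => (hA i).1, hdisj, fun i => (hA i).2⟩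

theorem stmt3 {X : Type*} [MeasurableSpace X] (U : Set (Measure X)) (hU : U.Nonempty)
    (hprob : ∀ μ ∈ U, IsProbabilityMeasure μ)
    (hfail : ∃ B : ℕ → Set X, (∀ n, MeasurableSet (B n)) ∧ Antitone B ∧ (⋂ n, B n) = ∅ ∧
      ¬ Tendsto (fun n => ⨆ μ ∈ U, μ (B n)) atTop (nhds 0)) :
    ∃ ε : ℝ≥0∞, 0 < ε ∧ ∃ A : ℕ → Set X, (∀ i, MeasurableSet (A i)) ∧
      Pairwise (Function.onFun Disjoint A) ∧ ∀ i, ε ≤ ⨆ μ ∈ U, μ (A i) :=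
  stmt3_general U hfail
end

section
/- Let U be a family of probability measures on X such that the envelope μ_U is continuous from above at the empty set. Then for every ε > 0 there exists a finite measure ν on X (a finite nonnegative linear combination of members of U) such that for every measurable set A, μ_U(A) ≤ ε + ν(A). -/
/-
Argue by contradiction. If no finite combination of members of `U` works, apply this to the
weights `2 ^ n` on the measures chosen so far: as the envelope is at most `1`, this yields
inductively sets `A n` and measures `m n ∈ U` with `ε < m n (A n)` while each earlier `m j` gives
`A n` mass below `2⁻¹ ^ n`. The tails `G N = ⋃ k ≥ N, A k` decrease to `D = limsup A`, so
continuity from above makes `m n (G n \ D)` small, while `m n D ≤ ∑ k > n, 2⁻¹ ^ k`. Hence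
`m n (A n) → 0`, which is absurd.
-/

open MeasureTheory Set Filter ENNReal

theorem exists_seq_of_forall_fin_exists {α : Type*} (P : α → Prop) (r : ℕ → α → α → Prop)
    (h : ∀ n (f : Fin n → α), (∀ j, P (f j)) → ∃ a, P a ∧ ∀ j, r n (f j) a) :
    ∃ x : ℕ → α, (∀ n, P (x n)) ∧ ∀ j n, j < n → r n (x j) (x n) := by
  choose g hgP hgr using fun n (f : Fin n → Subtype P) => h n (fun j => f j) fun j => (f j).2
  let x : ℕ → Subtype P := fun n => Nat.strongRec (fun n x => ⟨g n fun j => x j j.2, hgP _ _⟩) n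
  refine ⟨fun n => x n, fun n => (x n).2, fun j n hjn => ?_⟩
  have hx : x n = ⟨g n fun j : Fin n => x j, hgP _ _⟩ := Nat.strongRec_eq _ n
  show r n (x j).1 (x n).1
  rw [hx]
  exact hgr n (fun j => x j) ⟨j, hjn⟩

section

variable {X : Type*} [MeasurableSpace X] {U : Set (Measure X)}

def ContinuousFromAboveAtEmpty (U : Set (Measure X)) : Prop :=
  ∀ A : ℕ → Set X, (∀ n, MeasurableSet (A n)) → Antitone A → (⋂ n, A n) = ∅ →
    Tendsto (fun n => ⨆ μ ∈ U, μ (A n)) atTop (nhds 0)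

theorem iSup_measure_le_one (hprob : ∀ μ ∈ U, IsProbabilityMeasure μ) (A : Set X) :
    ⨆ μ ∈ U, μ A ≤ 1 :=
  iSup₂_le fun μ hμ => have := hprob μ hμ; prob_le_one

theorem tendsto_iSup_measure_diff_iInter
    (hcont : ContinuousFromAboveAtEmpty U)
    {G : ℕ → Set X} (hG : ∀ n, MeasurableSet (G n)) (hanti : Antitone G) :
    Tendsto (fun n => ⨆ μ ∈ U, μ (G n \ ⋂ k, G k)) atTop (nhds 0) :=
  hcont _ (fun n => (hG n).diff (.iInter hG)) (fun _ _ hab => sdiff_subset_sdiff_left (hanti hab))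
    <| eq_empty_iff_forall_notMem.2 fun _ hx =>
      (mem_iInter.1 hx 0).2 <| mem_iInter.2 fun n => (mem_iInter.1 hx n).1

theorem exists_measure_gt_and_forall_lt_of_not_dominated
    (hprob : ∀ μ ∈ U, IsProbabilityMeasure μ) {ε : ℝ≥0∞}
    (hnot : ∀ (N : ℕ) (c : Fin N → ℝ≥0∞) (μs : Fin N → Measure X), (∀ i, μs i ∈ U) →
      (∀ i, c i ≠ ∞) → ∃ A, MeasurableSet A ∧ ε + ∑ i, c i * μs i A < ⨆ μ ∈ U, μ A)
    {n : ℕ} (ms : Fin n → Measure X) (hms : ∀ j, ms j ∈ U) {δ : ℝ≥0∞} (hδ : δ ≠ 0) :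
    ∃ A, MeasurableSet A ∧ (∃ μ ∈ U, ε < μ A) ∧ ∀ j, ms j A < δ := by
  obtain ⟨A, hA, hlt⟩ := hnot n (fun _ => δ⁻¹) ms hms fun _ => inv_ne_top.2 hδ
  have hlt_one : ε + ∑ j, δ⁻¹ * ms j A < 1 := hlt.trans_le (iSup_measure_le_one hprob A)
  refine ⟨A, hA, ?_, fun j => ?_⟩
  · simpa only [lt_iSup_iff, exists_prop] using le_self_add.trans_lt hlt
  · have hj : ms j A / δ < 1 := by
      rw [ENNReal.div_eq_inv_mul]
      exact (Finset.single_le_sum (fun i _ => zero_le) (Finset.mem_univ j)).trans_lt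
        (le_add_self.trans_lt hlt_one)
    have := hprob _ (hms j)
    simpa using (ENNReal.div_lt_iff (.inl hδ) (.inr (measure_ne_top _ _))).1 hj

theorem tendsto_measure_diag_of_le_summable
    (hcont : ContinuousFromAboveAtEmpty U)
    {A : ℕ → Set X} (hA : ∀ n, MeasurableSet (A n)) {m : ℕ → Measure X} (hm : ∀ n, m n ∈ U)
    {δ : ℕ → ℝ≥0∞} (hδ : ∑' n, δ n ≠ ∞) (hsmall : ∀ j n, j < n → m j (A n) ≤ δ n) :
    Tendsto (fun n => m n (A n)) atTop (nhds 0) := by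
  set G : ℕ → Set X := fun N => ⋃ k, A (k + N)
  set D := ⋂ N, G N
  have hG : ∀ N, MeasurableSet (G N) := fun N => .iUnion fun k => hA _
  have hanti : Antitone G := by
    intro a b hab
    refine iUnion_subset fun k => subset_iUnion_of_subset (k + (b - a)) ?_
    rw [show k + (b - a) + a = k + b by omega]
  have hbound : ∀ n, m n (A n) ≤ (⨆ μ ∈ U, μ (G n \ D)) + ∑' k, δ (k + (n + 1)) := by
    intro n
    have hAG : A n ⊆ (G n \ D) ∪ D := by
      rw [sdiff_union_self]
      exact subset_union_of_subset_left (subset_iUnion_of_subset 0 (by rw [zero_add])) _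
    calc m n (A n) ≤ m n (G n \ D) + m n D := (measure_mono hAG).trans (measure_union_le _ _)
      _ ≤ (⨆ μ ∈ U, μ (G n \ D)) + ∑' k, δ (k + (n + 1)) := by
        gcongr
        · exact le_iSup₂ (f := fun μ _ => μ (G n \ D)) (m n) (hm n)
        · calc m n D ≤ m n (G (n + 1)) := measure_mono (iInter_subset G (n + 1))
            _ ≤ ∑' k, m n (A (k + (n + 1))) := measure_iUnion_le _
            _ ≤ ∑' k, δ (k + (n + 1)) := ENNReal.tsum_le_tsum fun k => hsmall _ _ (by omega)
  have hlim : Tendsto (fun n => (⨆ μ ∈ U, μ (G n \ D)) + ∑' k, δ (k + (n + 1))) atTop (nhds 0) := by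
    simpa using (tendsto_iSup_measure_diff_iInter hcont hG hanti).add
      ((ENNReal.tendsto_sum_nat_add δ hδ).comp (tendsto_add_atTop_nat 1))
  exact tendsto_of_tendsto_of_tendsto_of_le_of_le tendsto_const_nhds hlim (fun _ => zero_le) hbound

end

theorem stmt4_general {X : Type*} [MeasurableSpace X] (U : Set (Measure X))
    (hprob : ∀ μ ∈ U, IsProbabilityMeasure μ)
    (hcont : ∀ A : ℕ → Set X, (∀ n, MeasurableSet (A n)) → Antitone A → (⋂ n, A n) = ∅ →
      Tendsto (fun n => ⨆ μ ∈ U, μ (A n)) atTop (nhds 0)) :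
    ∀ ε : ℝ≥0∞, 0 < ε → ∃ (N : ℕ) (c : Fin N → ℝ≥0∞) (μs : Fin N → Measure X),
      (∀ i, μs i ∈ U) ∧ (∀ i, c i ≠ ∞) ∧
      ∀ A : Set X, MeasurableSet A → (⨆ μ ∈ U, μ A) ≤ ε + ∑ i, c i * μs i A := by
  intro ε hε
  by_contra! hnot
  obtain ⟨x, hx, hsmall⟩ := exists_seq_of_forall_fin_exists
    (fun p : Set X × Measure X => MeasurableSet p.1 ∧ p.2 ∈ U ∧ ε < p.2 p.1)
    (fun n p q => p.2 q.1 ≤ 2⁻¹ ^ n) fun n f hf => by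
      obtain ⟨A, hA, ⟨μ, hμ, hεμ⟩, hsmall⟩ := exists_measure_gt_and_forall_lt_of_not_dominated
        hprob hnot (fun j => (f j).2) (fun j => (hf j).2.1) (by simp : (2⁻¹ : ℝ≥0∞) ^ n ≠ 0)
      exact ⟨(A, μ), ⟨hA, hμ, hεμ⟩, fun j => (hsmall j).le⟩
  have hlim := tendsto_measure_diag_of_le_summable hcont (fun n => (hx n).1) (fun n => (hx n).2.1)
    (by simp) hsmall
  obtain ⟨n, hn⟩ := (hlim.eventually_lt_const hε).exists
  exact (hx n).2.2.not_gt hn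

theorem stmt4 {X : Type*} [MeasurableSpace X] (U : Set (Measure X)) (hU : U.Nonempty)
    (hprob : ∀ μ ∈ U, IsProbabilityMeasure μ)
    (hcont : ∀ A : ℕ → Set X, (∀ n, MeasurableSet (A n)) → Antitone A → (⋂ n, A n) = ∅ →
      Tendsto (fun n => ⨆ μ ∈ U, μ (A n)) atTop (nhds 0)) :
    ∀ ε : ℝ≥0∞, 0 < ε → ∃ (N : ℕ) (c : Fin N → ℝ≥0∞) (μs : Fin N → Measure X),
      (∀ i, μs i ∈ U) ∧ (∀ i, c i ≠ ∞) ∧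
      ∀ A : Set X, MeasurableSet A → (⨆ μ ∈ U, μ A) ≤ ε + ∑ i, c i * μs i A :=
  stmt4_general U hprob hcont
end

section
/- Let U be a family of probability measures on X whose envelope μ_U is continuous from above at the empty set. Then there exist a probability measure μ₀ on X and a non-decreasing function ρ : [0,1] → ℝ≥0 with ρ(t) → 0 as t → 0, such that μ(A) ≤ ρ(μ₀(A)) for every μ ∈ U and every measurable set A. (In particular, every μ ∈ U is absolutely continuous with respect to μ₀.) -/
/-!
First, for every `ε > 0` the envelope of `U` is dominated by `ε + ν` for a finite measure `ν`.
Otherwise one chooses greedily `μₙ ∈ U` and sets `Aₙ` with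
`μₙ Aₙ > ε + 2ⁿ ∑_{j<n} μⱼ Aₙ`. Then `μⱼ Aₙ ≤ 2⁻ⁿ` for `j < n`, so by Borel–Cantelli every `μⱼ`
vanishes on `L = limsup Aₙ`, and the sets `(⋃ k ≥ m, Aₖ) \ L` decrease to `∅` while carrying
`μₘ`-mass `> ε`, contradicting continuity from above.

Taking `ε = 2⁻ᵏ` gives finite measures `νₖ`; a weighted sum of their normalizations is a probability
measure `μ₀` with `νₖ ≤ cₖ μ₀`, and `ρ t = ⨅ k, (2⁻ᵏ + cₖ t)` works.
-/

open MeasureTheory Set Filter ENNReal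
open scoped NNReal Topology

section

variable {X : Type*} [MeasurableSpace X]

theorem exists_antitone_iInter_eq_empty_superset_diff_limsup {A : ℕ → Set X}
    (hA : ∀ n, MeasurableSet (A n)) :
    ∃ C : ℕ → Set X, (∀ m, MeasurableSet (C m)) ∧ Antitone C ∧ ⋂ m, C m = ∅ ∧
      ∀ m, A m \ limsup A atTop ⊆ C m := by
  have hL : limsup A atTop = ⋂ m, ⋃ k ≥ m, A k := limsup_eq_iInf_iSup_of_nat
  refine ⟨fun m => (⋃ k ≥ m, A k) \ limsup A atTop, fun m => ?_, fun m m' h => ?_, ?_, fun m => ?_⟩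
  · rw [hL]
    exact (MeasurableSet.biUnion (to_countable _) fun k _ => hA k).diff
      (.iInter fun m => .biUnion (to_countable _) fun k _ => hA k)
  · exact sdiff_subset_sdiff_left (biUnion_subset_biUnion_left fun k hk => le_trans h hk)
  · refine eq_empty_of_forall_notMem fun x hx => ?_
    simp only [mem_iInter, Set.mem_sdiff] at hx
    exact (hx 0).2 (hL ▸ mem_iInter.2 fun m => (hx m).1)
  · exact sdiff_subset_sdiff_left (subset_biUnion_of_mem (u := A) (le_refl m))

theorem measure_limsup_eq_zero_of_le_inv_two_pow {μ : Measure X} {A : ℕ → Set X}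
    (h : ∀ᶠ n in atTop, μ (A n) ≤ 2⁻¹ ^ n) : μ (limsup A atTop) = 0 := by
  obtain ⟨N, hN⟩ := eventually_atTop.1 h
  rw [← limsup_nat_add A N]
  refine measure_limsup_atTop_eq_zero (ne_top_of_le_ne_top (b := ∑' n, (2⁻¹ : ℝ≥0∞) ^ n) ?_ ?_)
  · simp
  · exact ENNReal.tsum_le_tsum fun n => (hN _ (Nat.le_add_left N n)).trans
      (pow_le_pow_right_of_le_one' (by norm_num) (Nat.le_add_right n N))

theorem exists_seq_of_forall_exists_lt_add {U : Set (Measure X)}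
    (hprob : ∀ μ ∈ U, IsProbabilityMeasure μ) {ε : ℝ≥0∞}
    (h : ∀ ν : Measure X, IsFiniteMeasure ν → ∃ μ ∈ U, ∃ A, MeasurableSet A ∧ ε + ν A < μ A) :
    ∃ (μ : ℕ → Measure X) (A : ℕ → Set X), (∀ n, μ n ∈ U) ∧ (∀ n, MeasurableSet (A n)) ∧
      (∀ j n, j < n → μ j (A n) ≤ 2⁻¹ ^ n) ∧ ∀ n, ε < μ n (A n) := by
  choose! next hnextU nextSet hnextSet hnext using h
  -- `S n = μ 0 + ⋯ + μ (n - 1)`; `(μ n, A n)` is chosen against the finite measure `2 ^ n • S n`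
  let S : ℕ → Measure X := fun n =>
    Nat.rec (motive := fun _ => Measure X) 0 (fun k s => s + next ((2 : ℝ≥0) ^ k • s)) n
  let μ n := next ((2 : ℝ≥0) ^ n • S n)
  let A n := nextSet ((2 : ℝ≥0) ^ n • S n)
  have hS_succ (n : ℕ) : S (n + 1) = S n + μ n := rfl
  have hS_fin (n : ℕ) : IsFiniteMeasure (S n) := by
    induction n with
    | zero => exact inferInstanceAs (IsFiniteMeasure 0)
    | succ n ih =>
      have := hprob _ (hnextU ((2 : ℝ≥0) ^ n • S n) inferInstance)
      rw [hS_succ]; infer_instance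
  have hμU (n : ℕ) : μ n ∈ U := hnextU _ inferInstance
  have hS_eq (n : ℕ) : S n = ∑ j ∈ Finset.range n, μ j := by
    induction n with
    | zero => rfl
    | succ n ih => rw [hS_succ, ih, Finset.sum_range_succ]
  have hlt (n : ℕ) : ε + 2 ^ n * S n (A n) < μ n (A n) := by
    simpa using hnext ((2 : ℝ≥0) ^ n • S n) inferInstance
  refine ⟨μ, A, hμU, fun n => hnextSet _ inferInstance, fun j n hjn => ?_, fun n =>
    le_self_add.trans_lt (hlt n)⟩
  have := hprob _ (hμU n)
  have hS : 2 ^ n * S n (A n) ≤ 1 := (le_add_self.trans_lt (hlt n)).le.trans prob_le_one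
  calc μ j (A n) ≤ S n (A n) := by
        rw [hS_eq, Measure.coe_finsetSum, Finset.sum_apply]
        exact Finset.single_le_sum (f := fun j => μ j (A n)) (fun _ _ => zero_le)
          (Finset.mem_range.2 hjn)
    _ ≤ 2⁻¹ ^ n := by
        rw [← ENNReal.inv_pow, ENNReal.le_inv_iff_mul_le, mul_comm]; exact hS

theorem exists_isFiniteMeasure_le_add {U : Set (Measure X)}
    (hprob : ∀ μ ∈ U, IsProbabilityMeasure μ)
    (hcont : ∀ A : ℕ → Set X, (∀ n, MeasurableSet (A n)) → Antitone A → (⋂ n, A n) = ∅ →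
      Tendsto (fun n => ⨆ μ ∈ U, μ (A n)) atTop (nhds 0))
    {ε : ℝ≥0∞} (hε : 0 < ε) :
    ∃ ν : Measure X, IsFiniteMeasure ν ∧ ∀ μ ∈ U, ∀ A, MeasurableSet A → μ A ≤ ε + ν A := by
  by_contra! h
  obtain ⟨μ, A, hμU, hA, hsmall, hbig⟩ := exists_seq_of_forall_exists_lt_add hprob h
  have hnull (j : ℕ) : μ j (limsup A atTop) = 0 :=
    measure_limsup_eq_zero_of_le_inv_two_pow (eventually_gt_atTop j |>.mono (hsmall j))
  obtain ⟨C, hC, hC_anti, hC_empty, hAC⟩ :=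
    exists_antitone_iInter_eq_empty_superset_diff_limsup hA
  obtain ⟨m, hm⟩ := ((hcont C hC hC_anti hC_empty).eventually_lt_const hε).exists
  refine hm.not_ge ((hbig m).le.trans ?_)
  calc μ m (A m) = μ m (A m \ limsup A atTop) := (measure_sdiff_null (hnull m)).symm
    _ ≤ μ m (C m) := measure_mono (hAC m)
    _ ≤ ⨆ μ ∈ U, μ (C m) := le_biSup (fun μ : Measure X => μ (C m)) (hμU m)

theorem isProbabilityMeasure_sum_smul {P : ℕ → Measure X} [∀ k, IsProbabilityMeasure (P k)]
    {w : ℕ → ℝ≥0∞} (hw : ∑' k, w k = 1) :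
    IsProbabilityMeasure (Measure.sum fun k => w k • P k) := by
  constructor
  simp [Measure.sum_apply, hw]

theorem exists_isProbabilityMeasure_le_smul (ν : ℕ → Measure X) [∀ k, IsFiniteMeasure (ν k)]
    (P : Measure X) [IsProbabilityMeasure P] :
    ∃ μ₀ : Measure X, IsProbabilityMeasure μ₀ ∧
      ∃ c : ℕ → ℝ≥0∞, (∀ k, c k ≠ ∞) ∧ ∀ k, ν k ≤ c k • μ₀ := by
  -- adding `P` makes each `ν k` nonzero, so that it can be normalized
  set Q := fun k => ν k + P
  have hQ_ne (k : ℕ) : Q k univ ≠ 0 := by simp [Q]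
  set R := fun k => (Q k univ)⁻¹ • Q k
  have hR (k : ℕ) : IsProbabilityMeasure (R k) :=
    have : NeZero (Q k) := ⟨fun h => hQ_ne k (by simp [h])⟩
    isProbabilityMeasureSMul
  have hw : ∑' k : ℕ, (2⁻¹ : ℝ≥0∞) ^ (k + 1) = 1 := by
    rw [ENNReal.tsum_geometric_add_one, one_sub_inv_two, inv_inv, ENNReal.inv_mul_cancel] <;> simp
  set μ₀ := Measure.sum fun k => (2⁻¹ : ℝ≥0∞) ^ (k + 1) • R k
  refine ⟨μ₀, isProbabilityMeasure_sum_smul hw, fun k => Q k univ * 2 ^ (k + 1),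
    fun k => ENNReal.mul_ne_top (measure_ne_top _ _) (by simp),
    fun k => Measure.le_iff'.2 fun s => ?_⟩
  calc ν k s ≤ Q k s := le_self_add
    _ = Q k univ * R k s := by
      rw [Measure.smul_apply, smul_eq_mul, ← mul_assoc,
        ENNReal.mul_inv_cancel (hQ_ne k) (measure_ne_top _ _), one_mul]
    _ = Q k univ * 2 ^ (k + 1) * ((2⁻¹ : ℝ≥0∞) ^ (k + 1) • R k) s := by
      rw [Measure.smul_apply _ (R k), smul_eq_mul, mul_assoc, ← mul_assoc (2 ^ _),
        ← mul_pow, ENNReal.mul_inv_cancel, one_pow, one_mul] <;> simp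
    _ ≤ Q k univ * 2 ^ (k + 1) * μ₀ s := by
      gcongr; exact Measure.le_sum (fun j => (2⁻¹ : ℝ≥0∞) ^ (j + 1) • R j) k
    _ = ((Q k univ * 2 ^ (k + 1)) • μ₀) s := rfl

theorem monotone_iInf_add_mul (ε c : ℕ → ℝ≥0∞) : Monotone fun t => ⨅ k, (ε k + c k * t) :=
  fun _ _ hst => iInf_mono fun _ => by gcongr

theorem tendsto_iInf_add_mul_nhds_zero {ε c : ℕ → ℝ≥0∞} (hε : Tendsto ε atTop (𝓝 0))
    (hc : ∀ k, c k ≠ ∞) : Tendsto (fun t => ⨅ k, (ε k + c k * t)) (𝓝 0) (𝓝 0) := by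
  refine tendsto_order.2 ⟨fun a ha => (ENNReal.not_lt_zero ha).elim, fun a ha => ?_⟩
  obtain ⟨k, hk⟩ := (hε.eventually_lt_const ha).exists
  have hlim : Tendsto (fun t => ε k + c k * t) (𝓝 0) (𝓝 (ε k)) := by
    simpa using (tendsto_const_nhds (x := ε k)).add
      (ENNReal.Tendsto.const_mul (tendsto_id (x := 𝓝 0)) (Or.inr (hc k)))
  exact (hlim.eventually_lt_const hk).mono fun t ht => (iInf_le _ k).trans_lt ht

end

theorem stmt5 {X : Type*} [MeasurableSpace X] (U : Set (Measure X)) (hU : U.Nonempty)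
    (hprob : ∀ μ ∈ U, IsProbabilityMeasure μ)
    (hcont : ∀ A : ℕ → Set X, (∀ n, MeasurableSet (A n)) → Antitone A → (⋂ n, A n) = ∅ →
      Tendsto (fun n => ⨆ μ ∈ U, μ (A n)) atTop (nhds 0)) :
    ∃ (μ₀ : Measure X) (ρ : ℝ≥0∞ → ℝ≥0∞), IsProbabilityMeasure μ₀ ∧ Monotone ρ ∧
      Tendsto ρ (nhdsWithin 0 (Set.Ioi 0)) (nhds 0) ∧
      ∀ μ ∈ U, ∀ A : Set X, MeasurableSet A → μ A ≤ ρ (μ₀ A) := by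
  obtain ⟨P, hP⟩ := hU
  have := hprob P hP
  choose ν hν_fin hν using fun k : ℕ =>
    exists_isFiniteMeasure_le_add hprob hcont (ENNReal.pow_pos (by norm_num : (0 : ℝ≥0∞) < 2⁻¹) k)
  obtain ⟨μ₀, hμ₀, c, hc_ne_top, hνc⟩ := exists_isProbabilityMeasure_le_smul ν P
  refine ⟨μ₀, fun t => ⨅ k, ((2⁻¹ : ℝ≥0∞) ^ k + c k * t), hμ₀, monotone_iInf_add_mul _ _,
    (tendsto_iInf_add_mul_nhds_zero ?_ hc_ne_top).mono_left nhdsWithin_le_nhds,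
    fun μ hμ A hA => le_iInf fun k => (hν k μ hμ A hA).trans (add_le_add_right (hνc k A) _)⟩
  exact ENNReal.tendsto_pow_atTop_nhds_zero_of_lt_one (by norm_num)
end

section
/- Let U be a family of probability measures on X and ε ∈ (0,1] such that the ε-fragmentation number N := N_U(ε) is finite and positive. Then there exists a probability measure μ_ε on X such that for every measurable set A, if μ_ε(A) ≤ ε/N², then sup_{μ∈U} μ(A) ≤ 2ε. -/
open MeasureTheory Set ENNReal

/-!
Lower the threshold from `2ε` to `ε` in `N` steps of `ε / N`. Since no `N + 1` disjoint sets
have `U`-measure at least `ε`, there is a first stage `k ≤ N` at which `k` disjoint sets `Bᵢ` have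
`U`-measure above `η + ε / N` while no `k + 1` disjoint sets have `U`-measure above `η ≤ 2ε`.
Pick `νᵢ ∈ U` with `νᵢ(Bᵢ) > η + ε / N` and let `μ_ε` be their average. If `μ_ε(A) ≤ ε / N²`,
then `νᵢ(A) ≤ ε / N`, so the sets `Bᵢ \ A` still have `U`-measure above `η`; if `A` had as well,
these would be `k + 1` such sets.
-/

theorem ENNReal.natCast_mul_div_sq_le_div {k N : ℕ} (hkN : k ≤ N) (ε : ℝ≥0∞) :
    k * (ε / N ^ 2) ≤ ε / N := calc
  (k : ℝ≥0∞) * (ε / N ^ 2) ≤ N * (ε / N ^ 2) := by gcongr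
  _ = ε * (N * (N : ℝ≥0∞)⁻¹) * (N : ℝ≥0∞)⁻¹ := by
    rw [div_eq_mul_inv, ENNReal.inv_pow, sq]; ring
  _ ≤ ε * 1 * (N : ℝ≥0∞)⁻¹ := by gcongr; exact ENNReal.mul_inv_le_one _
  _ = ε / N := by rw [mul_one, div_eq_mul_inv]

namespace MeasureTheory

variable {X : Type*} [MeasurableSpace X]

/-- The inequality is strict so that a witness `μ ∈ U` can be picked for each set. -/
def HasFragmentation (U : Set (Measure X)) (η : ℝ≥0∞) (k : ℕ) : Prop :=
  ∃ B : Fin k → Set X, (∀ i, MeasurableSet (B i)) ∧ Pairwise (Function.onFun Disjoint B) ∧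
    ∀ i, η < ⨆ μ ∈ U, μ (B i)

namespace HasFragmentation

variable {U : Set (Measure X)} {η : ℝ≥0∞}

theorem zero : HasFragmentation U η 0 :=
  ⟨Fin.elim0, fun i => i.elim0, fun i => i.elim0, fun i => i.elim0⟩

theorem cons {k : ℕ} {A : Set X} {B : Fin k → Set X} (hA : MeasurableSet A)
    (hB : ∀ i, MeasurableSet (B i)) (hdisj : Pairwise (Function.onFun Disjoint B))
    (hηA : η < ⨆ μ ∈ U, μ A) (hηB : ∀ i, η < ⨆ μ ∈ U, μ (B i \ A)) :
    HasFragmentation U η (k + 1) := by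
  refine ⟨Fin.cons A fun i => B i \ A, Fin.cases hA fun i => (hB i).diff hA, ?_,
    Fin.cases hηA hηB⟩
  intro i j hij
  induction i using Fin.cases <;> induction j using Fin.cases
  · exact absurd rfl hij
  · exact disjoint_sdiff_right
  · exact disjoint_sdiff_left
  · exact (hdisj (Fin.succ_injective _ |>.ne_iff.mp hij)).mono sdiff_subset sdiff_subset

end HasFragmentation

theorem iSup_le_of_not_hasFragmentation_one {U : Set (Measure X)} {η : ℝ≥0∞}
    (h : ¬ HasFragmentation U η 1) {A : Set X} (hA : MeasurableSet A) :
    ⨆ μ ∈ U, μ A ≤ η :=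
  not_lt.mp fun hlt =>
    h ⟨fun _ => A, fun _ => hA, fun i j hij => absurd (Subsingleton.elim i j) hij, fun _ => hlt⟩

noncomputable def uniformMixture {k : ℕ} (ν : Fin k → Measure X) : Measure X :=
  (k : ℝ≥0∞)⁻¹ • ∑ i, ν i

theorem uniformMixture_apply {k : ℕ} (ν : Fin k → Measure X) (A : Set X) :
    uniformMixture ν A = (k : ℝ≥0∞)⁻¹ * ∑ i, ν i A := by
  simp only [uniformMixture, Measure.smul_apply, smul_eq_mul, Measure.finsetSum_apply]

theorem isProbabilityMeasure_uniformMixture {k : ℕ} [NeZero k] (ν : Fin k → Measure X)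
    [∀ i, IsProbabilityMeasure (ν i)] : IsProbabilityMeasure (uniformMixture ν) := by
  constructor
  simp only [uniformMixture_apply, measure_univ, Finset.sum_const, Finset.card_univ,
    Fintype.card_fin, nsmul_eq_mul, mul_one]
  exact ENNReal.inv_mul_cancel (NeZero.ne _) (natCast_ne_top k)

theorem apply_le_mul_uniformMixture {k : ℕ} (ν : Fin k → Measure X) (i : Fin k) (A : Set X) :
    ν i A ≤ k * uniformMixture ν A := by
  rw [uniformMixture_apply, ← mul_assoc, ENNReal.mul_inv_cancel (by simpa using i.pos.ne')
    (natCast_ne_top k), one_mul]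
  exact Finset.single_le_sum (f := fun j => ν j A) (fun j _ => zero_le) (Finset.mem_univ i)

theorem exists_isProbabilityMeasure_iSup_le_of_hasFragmentation {U : Set (Measure X)}
    (hU : U.Nonempty) (hprob : ∀ μ ∈ U, IsProbabilityMeasure μ) {η δ c : ℝ≥0∞} {k : ℕ}
    (hkc : k * c ≤ δ) (hfrag : HasFragmentation U (η + δ) k)
    (hmax : ¬ HasFragmentation U η (k + 1)) :
    ∃ μe : Measure X, IsProbabilityMeasure μe ∧
      ∀ A, MeasurableSet A → μe A ≤ c → ⨆ μ ∈ U, μ A ≤ η := by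
  rcases Nat.eq_zero_or_pos k with rfl | hk
  · obtain ⟨μ₀, hμ₀⟩ := hU
    exact ⟨μ₀, hprob μ₀ hμ₀, fun A hA _ => iSup_le_of_not_hasFragmentation_one hmax hA⟩
  have : NeZero k := ⟨hk.ne'⟩
  obtain ⟨B, hBm, hBd, hBU⟩ := hfrag
  choose ν hνU hνB using fun i => lt_biSup_iff.mp (hBU i)
  have : ∀ i, IsProbabilityMeasure (ν i) := fun i => hprob _ (hνU i)
  refine ⟨uniformMixture ν, isProbabilityMeasure_uniformMixture ν, fun A hA hAc => ?_⟩
  by_contra! hηA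
  refine hmax (.cons hA hBm hBd hηA fun i => lt_biSup_iff.mpr ⟨ν i, hνU i, ?_⟩)
  have hνA : ν i A ≤ δ := calc
    ν i A ≤ k * uniformMixture ν A := apply_le_mul_uniformMixture ν i A
    _ ≤ k * c := by gcongr
    _ ≤ δ := hkc
  refine lt_of_add_lt_add_right (a := δ) ?_
  calc η + δ < ν i (B i) := hνB i
    _ ≤ ν i (B i ∩ A) + ν i (B i \ A) := measure_le_inter_add_sdiff _ _ _
    _ ≤ ν i (B i \ A) + δ := by
      rw [add_comm]; gcongr; exact (measure_mono inter_subset_right).trans hνA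

theorem exists_hasFragmentation_add_not_hasFragmentation_succ {U : Set (Measure X)}
    {a : ℝ≥0∞} (δ : ℝ≥0∞) {N : ℕ} (hN : ¬ HasFragmentation U a (N + 1)) :
    ∃ k ≤ N, ∃ η ≤ a + N * δ, HasFragmentation U (η + δ) k ∧ ¬ HasFragmentation U η (k + 1) := by
  classical
  have hex : ∃ m, ¬ HasFragmentation U (a + (N - m : ℕ) * δ) (m + 1) := ⟨N, by simpa using hN⟩
  set k := Nat.find hex
  have hkN : k ≤ N := Nat.find_min' hex (by simpa using hN)
  refine ⟨k, hkN, a + (N - k : ℕ) * δ, by gcongr; exact Nat.sub_le N k, ?_, Nat.find_spec hex⟩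
  rcases Nat.eq_zero_or_pos k with hk | hk
  · rw [hk]; exact .zero
  · obtain ⟨m, hkm⟩ := Nat.exists_eq_add_one_of_ne_zero hk.ne'
    have hm := not_not.mp (Nat.find_min hex (show m < k by omega))
    rw [hkm]
    rwa [show N - m = N - (m + 1) + 1 by omega, Nat.cast_succ, add_one_mul, ← add_assoc] at hm

end MeasureTheory

theorem stmt6_general {X : Type*} [MeasurableSpace X] (U : Set (Measure X)) (hU : U.Nonempty)
    (hprob : ∀ μ ∈ U, IsProbabilityMeasure μ)
    (ε : ℝ≥0∞) (N : ℕ)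
    (hmax : ¬ ∃ B : Fin (N + 1) → Set X, (∀ i, MeasurableSet (B i)) ∧
      Pairwise (Function.onFun Disjoint B) ∧ ∀ i, ε ≤ ⨆ μ ∈ U, μ (B i)) :
    ∃ μe : Measure X, IsProbabilityMeasure μe ∧
      ∀ A : Set X, MeasurableSet A → μe A ≤ ε / (N : ℝ≥0∞) ^ 2 →
        (⨆ μ ∈ U, μ A) ≤ 2 * ε := by
  have hN : ¬ HasFragmentation U ε (N + 1) := fun ⟨B, hBm, hBd, hBU⟩ =>
    hmax ⟨B, hBm, hBd, fun i => (hBU i).le⟩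
  obtain ⟨k, hkN, η, hη, hfrag, hnot⟩ :=
    exists_hasFragmentation_add_not_hasFragmentation_succ (ε / N) hN
  obtain ⟨μe, hμe, hsmall⟩ := exists_isProbabilityMeasure_iSup_le_of_hasFragmentation hU hprob
    (natCast_mul_div_sq_le_div hkN ε) hfrag hnot
  refine ⟨μe, hμe, fun A hA hAc => (hsmall A hA hAc).trans (hη.trans ?_)⟩
  calc ε + N * (ε / N) ≤ ε + ε := by gcongr; exact mul_div_le
    _ = 2 * ε := (two_mul ε).symm

theorem stmt6 {X : Type*} [MeasurableSpace X] (U : Set (Measure X)) (hU : U.Nonempty)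
    (hprob : ∀ μ ∈ U, IsProbabilityMeasure μ)
    (ε : ℝ≥0∞) (hε : 0 < ε) (hε1 : ε ≤ 1) (N : ℕ) (hN : 0 < N)
    (hex : ∃ B : Fin N → Set X, (∀ i, MeasurableSet (B i)) ∧ Pairwise (Function.onFun Disjoint B) ∧
      ∀ i, ε ≤ ⨆ μ ∈ U, μ (B i))
    (hmax : ¬ ∃ B : Fin (N + 1) → Set X, (∀ i, MeasurableSet (B i)) ∧
      Pairwise (Function.onFun Disjoint B) ∧ ∀ i, ε ≤ ⨆ μ ∈ U, μ (B i)) :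
    ∃ μe : Measure X, IsProbabilityMeasure μe ∧
      ∀ A : Set X, MeasurableSet A → μe A ≤ ε / (N : ℝ≥0∞) ^ 2 →
        (⨆ μ ∈ U, μ A) ≤ 2 * ε :=
  stmt6_general U hU hprob ε N hmax
end

section
/- Let μ₀ be a probability measure and μ a probability measure with μ ≪ μ₀, and suppose ρ : (0,1] → ℝ≥0 satisfies: μ(A) ≤ ρ(μ₀(A)) for all measurable A with μ₀(A) > 0, ρ is non-decreasing, and t ↦ ρ(t)/t is non-increasing. Fix ε ∈ (0,1] with ρ(ε) > 0 and let η := ρ(ε)/ε. Then the set A := { x : dμ/dμ₀(x) > η } satisfies μ₀(A) ≤ ε and μ(A) ≤ ρ(ε). -/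
open MeasureTheory Set Filter ENNReal

/-! On `A = {η < dμ/dμ₀}` one has `η μ₀(A) < μ(A)` as soon as `μ₀(A) > 0`. If `μ₀(A) > ε`, the
antitone ratio `ρ(t)/t` gives `μ(A) ≤ ρ(μ₀(A)) ≤ η μ₀(A)`, a contradiction; hence `μ₀(A) ≤ ε`, and
monotonicity of `ρ` gives `μ(A) ≤ ρ(ε)`. -/

theorem MeasureTheory.Measure.mul_measure_lt_measure_setOf_lt_rnDeriv {α : Type*}
    [MeasurableSpace α] (μ ν : Measure α) {η : ℝ≥0∞}
    (h0 : ν {x | η < μ.rnDeriv ν x} ≠ 0) (hfin : ν {x | η < μ.rnDeriv ν x} ≠ ∞) :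
    η * ν {x | η < μ.rnDeriv ν x} < μ {x | η < μ.rnDeriv ν x} := by
  set s := {x | η < μ.rnDeriv ν x}
  have hs : MeasurableSet s := measurableSet_lt measurable_const (μ.measurable_rnDeriv ν)
  have hη : η ≠ ∞ := by
    rintro rfl
    exact h0 (by simp [s])
  calc η * ν s = ∫⁻ _ in s, η ∂ν := (setLIntegral_const s η).symm
    _ < ∫⁻ x in s, μ.rnDeriv ν x ∂ν :=
        setLIntegral_strict_mono hs h0 (μ.measurable_rnDeriv ν)
          (by rw [setLIntegral_const]; exact mul_ne_top hη hfin) (ae_of_all _ fun _ hx ↦ hx)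
    _ ≤ μ s := Measure.setLIntegral_rnDeriv_le s

theorem stmt10_general {X : Type*} [MeasurableSpace X] (μ₀ μ : Measure X)
    [IsProbabilityMeasure μ₀] (hac : μ ≪ μ₀)
    (ρ : ℝ≥0∞ → ℝ≥0∞)
    (hsm : ∀ A : Set X, MeasurableSet A → 0 < μ₀ A → μ A ≤ ρ (μ₀ A))
    (hmono : Monotone ρ)
    (hratio : ∀ s t : ℝ≥0∞, 0 < s → s ≤ t → t ≤ 1 → ρ t / t ≤ ρ s / s)
    (ε : ℝ≥0∞) (hε : 0 < ε) :
    μ₀ {x | ρ ε / ε < μ.rnDeriv μ₀ x} ≤ ε ∧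
    μ {x | ρ ε / ε < μ.rnDeriv μ₀ x} ≤ ρ ε := by
  set A := {x | ρ ε / ε < μ.rnDeriv μ₀ x}
  have hA : MeasurableSet A := measurableSet_lt measurable_const (μ.measurable_rnDeriv μ₀)
  have hμ₀A : μ₀ A ≤ ε := by
    by_contra! hεA
    have hpos : 0 < μ₀ A := hε.trans hεA
    have hρA : ρ (μ₀ A) ≤ ρ ε / ε * μ₀ A :=
      (ENNReal.div_le_iff hpos.ne' (measure_ne_top μ₀ A)).1 (hratio ε _ hε hεA.le prob_le_one)
    exact ((hsm A hA hpos).trans hρA).not_gt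
      (μ.mul_measure_lt_measure_setOf_lt_rnDeriv μ₀ hpos.ne' (measure_ne_top μ₀ A))
  refine ⟨hμ₀A, ?_⟩
  rcases eq_zero_or_pos (μ₀ A) with hzero | hpos
  · simp [hac hzero]
  · exact (hsm A hA hpos).trans (hmono hμ₀A)

theorem stmt10 {X : Type*} [MeasurableSpace X] (μ₀ μ : Measure X)
    [IsProbabilityMeasure μ₀] [IsProbabilityMeasure μ] (hac : μ ≪ μ₀)
    (ρ : ℝ≥0∞ → ℝ≥0∞)
    (hsm : ∀ A : Set X, MeasurableSet A → 0 < μ₀ A → μ A ≤ ρ (μ₀ A))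
    (hmono : Monotone ρ)
    (hratio : ∀ s t : ℝ≥0∞, 0 < s → s ≤ t → t ≤ 1 → ρ t / t ≤ ρ s / s)
    (ε : ℝ≥0∞) (hε : 0 < ε) (hε1 : ε ≤ 1) (hρε : 0 < ρ ε) :
    μ₀ {x | ρ ε / ε < μ.rnDeriv μ₀ x} ≤ ε ∧
    μ {x | ρ ε / ε < μ.rnDeriv μ₀ x} ≤ ρ ε :=
  stmt10_general μ₀ μ hac ρ hsm hmono hratio ε hε
end

section
/- Let U be a family of probability measures on X, ε, δ ∈ (0,1], and N ≥ 1 an integer such that there exist N pairwise disjoint measurable sets B_1,…,B_N with sup_{μ∈U} μ(B_i) ≥ ε for each i. Then there exist k ≥ Nδ/2 pairwise disjoint measurable sets A_1,…,A_k and measures μ_1,…,μ_k ∈ U such that μ_i(A_i) ≥ ε for all i, and μ_i(A_j) ≤ δ for all distinct i, j. -/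
/-!
Choose `ν i ∈ U` with `ν i (B i) > ε'`, and moreover `ν i (B i) > δ` whenever some measure of
`U` gives `B i` mass more than `δ`. If at least `Nδ/2` indices are light (no measure of `U` gives
`B i` mass more than `δ`), those indices already work. Otherwise more than half of the indices are
heavy, so `∑ i, ν i (B i) ≥ Nδ/2`. As the `B u` are disjoint, `ν i` exceeds `δ` on at most
`(1 - ν i (B i)) / δ` of the other sets, so the conflict graph (`i ~ u` when `ν i (B u) > δ` or
`ν u (B i) > δ`) has at most `N/δ - N/2` edges, and the Caro–Wei–Turán bound
`α ≥ N² / (N + 2|E|)` yields an independent set of size at least `Nδ/2`.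
-/

open MeasureTheory Set Finset ENNReal

namespace SimpleGraph

variable {V : Type*} [DecidableEq V] (G : SimpleGraph V) [DecidableRel G.Adj]

/-- Caro–Wei: removing a vertex of minimum degree together with its neighbours costs at most `1`
of the sum and only decreases the degrees of the remaining vertices. -/
theorem exists_isIndepSet_sum_inv_le_card (s : Finset V) :
    ∃ t ⊆ s, G.IsIndepSet (t : Set V) ∧
      ∑ v ∈ s, ((#{u ∈ s | G.Adj v u} : ℝ) + 1)⁻¹ ≤ #t := by
  induction s using Finset.strongInduction with
  | H s ih =>
  rcases s.eq_empty_or_nonempty with rfl | hs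
  · exact ⟨∅, subset_rfl, by simp, by simp⟩
  obtain ⟨v, hv, hmin⟩ := s.exists_min_image (fun u => #{w ∈ s | G.Adj u w}) hs
  set S := insert v {w ∈ s | G.Adj v w}
  have hSs : S ⊆ s := insert_subset hv (filter_subset _ _)
  obtain ⟨t, hts, ht, hsum⟩ := ih (s \ S) (sdiff_ssubset hSs (insert_nonempty _ _))
  have hvt : v ∉ t := fun h => (mem_sdiff.1 (hts h)).2 (mem_insert_self _ _)
  have hnadj : ∀ u ∈ t, ¬G.Adj v u := fun u hu hvu =>
    (mem_sdiff.1 (hts hu)).2 (mem_insert_of_mem (mem_filter.2 ⟨(mem_sdiff.1 (hts hu)).1, hvu⟩))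
  refine ⟨insert v t, insert_subset hv (hts.trans sdiff_subset), ?_, ?_⟩
  · rw [coe_insert]
    exact ht.insert fun u hu _ => ⟨hnadj u hu, fun h => hnadj u hu h.symm⟩
  have hS : ∑ u ∈ S, ((#{w ∈ s | G.Adj u w} : ℝ) + 1)⁻¹ ≤ 1 := by
    calc ∑ u ∈ S, ((#{w ∈ s | G.Adj u w} : ℝ) + 1)⁻¹
        ≤ #S • ((#{w ∈ s | G.Adj v w} : ℝ) + 1)⁻¹ :=
          sum_le_card_nsmul _ _ _ fun u hu => by
            gcongr ((?_ : ℝ) + 1)⁻¹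
            exact_mod_cast hmin u (hSs hu)
      _ = 1 := by
          rw [card_insert_of_notMem (by simp), nsmul_eq_mul]
          push_cast
          exact mul_inv_cancel₀ (by positivity)
  have hrest : ∑ u ∈ s \ S, ((#{w ∈ s | G.Adj u w} : ℝ) + 1)⁻¹
      ≤ ∑ u ∈ s \ S, ((#{w ∈ s \ S | G.Adj u w} : ℝ) + 1)⁻¹ :=
    sum_le_sum fun u _ => by
      gcongr
      exact sdiff_subset
  calc ∑ u ∈ s, ((#{w ∈ s | G.Adj u w} : ℝ) + 1)⁻¹
      = ∑ u ∈ s \ S, ((#{w ∈ s | G.Adj u w} : ℝ) + 1)⁻¹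
        + ∑ u ∈ S, ((#{w ∈ s | G.Adj u w} : ℝ) + 1)⁻¹ := (sum_sdiff hSs).symm
    _ ≤ #t + 1 := add_le_add (hrest.trans hsum) hS
    _ = #(insert v t) := by rw [card_insert_of_notMem hvt]; push_cast; rfl

theorem exists_isIndepSet_sq_card_le (s : Finset V) :
    ∃ t ⊆ s, G.IsIndepSet (t : Set V) ∧
      #s ^ 2 ≤ #t * (#s + ∑ v ∈ s, #{u ∈ s | G.Adj v u}) := by
  obtain ⟨t, hts, ht, hsum⟩ := G.exists_isIndepSet_sum_inv_le_card s
  refine ⟨t, hts, ht, ?_⟩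
  have hcs := sum_sq_le_sum_mul_sum_of_sq_le_mul s (r := fun _ => (1 : ℝ))
    (f := fun v => ((#{u ∈ s | G.Adj v u} : ℝ) + 1)⁻¹)
    (g := fun v => (#{u ∈ s | G.Adj v u} : ℝ) + 1)
    (fun _ _ => by positivity) (fun _ _ => by positivity)
    (fun _ _ => by rw [inv_mul_cancel₀ (by positivity)]; norm_num)
  simp only [sum_const, nsmul_eq_mul, mul_one, sum_add_distrib] at hcs
  have : (#s : ℝ) ^ 2 ≤ #t * (#s + ∑ v ∈ s, (#{u ∈ s | G.Adj v u} : ℝ)) :=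
    (hcs.trans (mul_le_mul_of_nonneg_right hsum (by positivity))).trans_eq (by ring)
  exact_mod_cast this

end SimpleGraph

theorem exists_pairwise_not_card_sq_le {ι : Type*} [Fintype ι] [DecidableEq ι]
    (r : ι → ι → Prop) [DecidableRel r] :
    ∃ I : Finset ι, (I : Set ι).Pairwise (fun j t => ¬r j t) ∧
      Fintype.card ι ^ 2 ≤ #I * (Fintype.card ι + 2 * ∑ j, #{u | j ≠ u ∧ r j u}) := by
  classical
  obtain ⟨I, -, hI, hcard⟩ := (SimpleGraph.fromRel r).exists_isIndepSet_sq_card_le univ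
  refine ⟨I, fun j hj t ht hjt hr => hI hj ht hjt ⟨hjt, .inl hr⟩, hcard.trans ?_⟩
  have hdeg : ∀ v, #{u | (SimpleGraph.fromRel r).Adj v u} ≤
      #{u | v ≠ u ∧ r v u} + #{u | u ≠ v ∧ r u v} := fun v => by
    refine (card_le_card fun u hu => ?_).trans (card_union_le _ _)
    simp only [SimpleGraph.fromRel_adj, Finset.mem_filter, Finset.mem_univ, true_and,
      Finset.mem_union] at hu ⊢
    rcases hu with ⟨hvu, h | h⟩
    · exact .inl ⟨hvu, h⟩
    · exact .inr ⟨hvu.symm, h⟩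
  have hswap : ∑ v, #{u | u ≠ v ∧ r u v} = ∑ j, #{u | j ≠ u ∧ r j u} := by
    simp only [card_filter]
    exact sum_comm
  rw [card_univ]
  gcongr
  calc ∑ v, #{u | (SimpleGraph.fromRel r).Adj v u}
      ≤ ∑ v, (#{u | v ≠ u ∧ r v u} + #{u | u ≠ v ∧ r u v}) := sum_le_sum fun v _ => hdeg v
    _ = 2 * ∑ j, #{u | j ≠ u ∧ r j u} := by rw [sum_add_distrib, hswap, two_mul]

theorem exists_mem_lt_and_lt_of_lt_biSup {α β : Type*} [CompleteLinearOrder β] {s : Set α}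
    {f : α → β} {a : β} (b : β) (ha : a < ⨆ i ∈ s, f i) :
    ∃ i ∈ s, a < f i ∧ (b < ⨆ i ∈ s, f i → b < f i) := by
  by_cases hb : b < ⨆ i ∈ s, f i
  · obtain ⟨i, hi, hlt⟩ := lt_biSup_iff.1 (max_lt ha hb)
    exact ⟨i, hi, (le_max_left a b).trans_lt hlt, fun _ => (le_max_right a b).trans_lt hlt⟩
  · obtain ⟨i, hi, hlt⟩ := lt_biSup_iff.1 ha
    exact ⟨i, hi, hlt, fun h => absurd h hb⟩

theorem card_mul_le_two_mul_sum {ι : Type*} [Fintype ι] (f : ι → ℝ≥0∞)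
    {δ : ℝ≥0∞} {L : Finset ι} (hL : 2 * #L ≤ Fintype.card ι) (hf : ∀ j ∉ L, δ ≤ f j) :
    Fintype.card ι * δ ≤ 2 * ∑ j, f j := by
  classical
  have hsplit : #L + #Lᶜ = Fintype.card ι := card_add_card_compl L
  have hLc : (#L : ℝ≥0∞) ≤ #Lᶜ := by exact_mod_cast (by omega : #L ≤ #Lᶜ)
  calc (Fintype.card ι : ℝ≥0∞) * δ = #L * δ + #Lᶜ * δ := by rw [← hsplit]; push_cast; ring
    _ ≤ 2 * (#Lᶜ * δ) := by rw [two_mul]; gcongr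
    _ = 2 * (#Lᶜ • δ) := by rw [nsmul_eq_mul]
    _ ≤ 2 * ∑ j ∈ Lᶜ, f j := by
        gcongr
        exact card_nsmul_le_sum _ _ _ fun j hj => hf j (Finset.mem_compl.1 hj)
    _ ≤ 2 * ∑ j, f j := by gcongr; exact subset_univ _

section Packing

variable {X ι : Type*} [MeasurableSpace X] {B : ι → Set X}

theorem mul_card_filter_lt_add_le_measure_univ [Fintype ι] [DecidableEq ι]
    (hBm : ∀ i, MeasurableSet (B i)) (hBd : Pairwise (Function.onFun Disjoint B))
    (μ : Measure X) (δ : ℝ≥0∞) (j : ι) :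
    δ * #{u | j ≠ u ∧ δ < μ (B u)} + μ (B j) ≤ μ univ := by
  set F : Finset ι := {u | j ≠ u ∧ δ < μ (B u)}
  have hjF : j ∉ F := by simp [F]
  calc δ * #F + μ (B j) = #F • δ + μ (B j) := by rw [nsmul_eq_mul, mul_comm]
    _ ≤ ∑ u ∈ F, μ (B u) + μ (B j) := by
        gcongr
        exact card_nsmul_le_sum F _ δ fun u hu => (Finset.mem_filter.1 hu).2.2.le
    _ = ∑ u ∈ insert j F, μ (B u) := by rw [sum_insert hjF, add_comm]
    _ = μ (⋃ u ∈ insert j F, B u) :=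
        (measure_biUnion_finset (fun _ _ _ _ h => hBd h) fun u _ => hBm u).symm
    _ ≤ μ univ := measure_mono (subset_univ _)

theorem exists_finset_pairwise_measure_le [Fintype ι]
    (hBm : ∀ i, MeasurableSet (B i)) (hBd : Pairwise (Function.onFun Disjoint B))
    {ν : ι → Measure X} (hν : ∀ j, ν j univ ≤ 1) {δ : ℝ≥0∞}
    (hmass : Fintype.card ι * δ ≤ 2 * ∑ j, ν j (B j)) :
    ∃ I : Finset ι, Fintype.card ι * δ / 2 ≤ #I ∧
      (I : Set ι).Pairwise fun j t => ν j (B t) ≤ δ := by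
  classical
  obtain ⟨I, hI, hcard⟩ := exists_pairwise_not_card_sq_le fun j u => δ < ν j (B u)
  refine ⟨I, ENNReal.div_le_of_le_mul' ?_, fun j hj t ht hjt => not_lt.1 (hI hj ht hjt)⟩
  set n := Fintype.card ι
  set D := ∑ j, #{u | j ≠ u ∧ δ < ν j (B u)}
  have hconflicts : δ * D + ∑ j, ν j (B j) ≤ n := by
    calc δ * D + ∑ j, ν j (B j) = ∑ j, (δ * #{u | j ≠ u ∧ δ < ν j (B u)} + ν j (B j)) := by
          simp only [D, sum_add_distrib, Nat.cast_sum, mul_sum]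
      _ ≤ ∑ _j : ι, (1 : ℝ≥0∞) :=
          sum_le_sum fun j _ => (mul_card_filter_lt_add_le_measure_univ hBm hBd _ δ j).trans (hν j)
      _ = n := by simp [n]
  have hweighted : δ * (n + 2 * D) ≤ 2 * n := by
    calc δ * (n + 2 * D) = n * δ + 2 * (δ * D) := by ring
      _ ≤ 2 * ∑ j, ν j (B j) + 2 * (δ * D) := by gcongr
      _ = 2 * (δ * D + ∑ j, ν j (B j)) := by ring
      _ ≤ 2 * n := by gcongr
  have hcard' : (n : ℝ≥0∞) ^ 2 ≤ #I * (n + 2 * D) := by exact_mod_cast hcard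
  rcases eq_or_ne n 0 with hn | hn
  · simp [hn]
  refine (ENNReal.mul_le_mul_iff_right (Nat.cast_ne_zero.2 hn) (natCast_ne_top n)).1 ?_
  calc (n : ℝ≥0∞) * (n * δ) = δ * n ^ 2 := by ring
    _ ≤ δ * (#I * (n + 2 * D)) := by gcongr
    _ = #I * (δ * (n + 2 * D)) := by ring
    _ ≤ #I * (2 * n) := by gcongr
    _ = n * (2 * #I) := by ring

end Packing

theorem exists_fin_family_of_finset {X ι : Type*} [MeasurableSpace X] (U : Set (Measure X))
    {B : ι → Set X} (hBm : ∀ i, MeasurableSet (B i)) (hBd : Pairwise (Function.onFun Disjoint B))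
    {ν : ι → Measure X} (hνU : ∀ j, ν j ∈ U) {ε' δ : ℝ≥0∞} (hν : ∀ j, ε' ≤ ν j (B j))
    {I : Finset ι} (hI : (I : Set ι).Pairwise fun j t => ν j (B t) ≤ δ) :
    ∃ (A : Fin #I → Set X) (μs : Fin #I → Measure X),
      (∀ i, MeasurableSet (A i)) ∧ Pairwise (Function.onFun Disjoint A) ∧
      (∀ i, μs i ∈ U) ∧ (∀ i, ε' ≤ μs i (A i)) ∧
      ∀ i j, i ≠ j → μs i (A j) ≤ δ := by
  set e : Fin #I ↪ ι := I.equivFin.symm.toEmbedding.trans (Function.Embedding.subtype _)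
  exact ⟨B ∘ e, ν ∘ e, fun i => hBm _, fun i j hij => hBd (e.injective.ne hij), fun i => hνU _,
    fun i => hν _, fun i j hij => hI (I.equivFin.symm i).2 (I.equivFin.symm j).2
      (e.injective.ne hij)⟩

theorem stmt12_general {X : Type*} [MeasurableSpace X] (U : Set (Measure X))
    (hprob : ∀ μ ∈ U, IsProbabilityMeasure μ)
    (ε δ : ℝ≥0∞) (hδ1 : δ ≤ 1)
    (N : ℕ)
    (hfrag : ∃ B : Fin N → Set X, (∀ i, MeasurableSet (B i)) ∧
      Pairwise (Function.onFun Disjoint B) ∧ ∀ i, ε ≤ ⨆ μ ∈ U, μ (B i)) :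
    ∀ ε' : ℝ≥0∞, ε' < ε → ∃ k : ℕ, (N : ℝ≥0∞) * δ / 2 ≤ (k : ℝ≥0∞) ∧
      ∃ (A : Fin k → Set X) (μs : Fin k → Measure X),
        (∀ i, MeasurableSet (A i)) ∧ Pairwise (Function.onFun Disjoint A) ∧
        (∀ i, μs i ∈ U) ∧ (∀ i, ε' ≤ μs i (A i)) ∧
        ∀ i j, i ≠ j → μs i (A j) ≤ δ := by
  intro ε' hε'
  obtain ⟨B, hBm, hBd, hBε⟩ := hfrag
  choose ν hνU hνε hνδ using fun i => exists_mem_lt_and_lt_of_lt_biSup δ (hε'.trans_le (hBε i))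
  set L : Finset (Fin N) := {t | ⨆ μ ∈ U, μ (B t) ≤ δ}
  obtain ⟨I, hIcard, hI⟩ : ∃ I : Finset (Fin N), (N : ℝ≥0∞) * δ / 2 ≤ #I ∧
      (I : Set (Fin N)).Pairwise fun j t => ν j (B t) ≤ δ := by
    by_cases hL : (N : ℝ≥0∞) * δ / 2 ≤ #L
    · exact ⟨L, hL, fun j _ t ht _ =>
        (le_biSup (fun μ => μ (B t)) (hνU j)).trans (Finset.mem_filter.1 ht).2⟩
    have hL2 : 2 * #L ≤ N := by
      have : (2 * #L : ℝ≥0∞) ≤ N := calc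
        (2 * #L : ℝ≥0∞) = #L * 2 := mul_comm _ _
        _ ≤ N * δ := ((ENNReal.lt_div_iff_mul_lt (by simp) (by simp)).1 (not_le.1 hL)).le
        _ ≤ N := mul_le_of_le_one_right' hδ1
      exact_mod_cast this
    simpa using exists_finset_pairwise_measure_le hBm hBd
      (fun j => (hprob _ (hνU j)).measure_univ.le)
      (card_mul_le_two_mul_sum (fun j => ν j (B j)) (by simpa using hL2)
        fun j hj => (hνδ j (not_le.1 fun h => hj (Finset.mem_filter.2 ⟨Finset.mem_univ _, h⟩))).le)
  exact ⟨#I, hIcard, exists_fin_family_of_finset U hBm hBd hνU (fun j => (hνε j).le) hI⟩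

theorem stmt12 {X : Type*} [MeasurableSpace X] (U : Set (Measure X)) (hU : U.Nonempty)
    (hprob : ∀ μ ∈ U, IsProbabilityMeasure μ)
    (ε δ : ℝ≥0∞) (hε : 0 < ε) (hε1 : ε ≤ 1) (hδ : 0 < δ) (hδ1 : δ ≤ 1)
    (N : ℕ) (hN : 1 ≤ N)
    (hfrag : ∃ B : Fin N → Set X, (∀ i, MeasurableSet (B i)) ∧
      Pairwise (Function.onFun Disjoint B) ∧ ∀ i, ε ≤ ⨆ μ ∈ U, μ (B i)) :
    ∀ ε' : ℝ≥0∞, ε' < ε → ∃ k : ℕ, (N : ℝ≥0∞) * δ / 2 ≤ (k : ℝ≥0∞) ∧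
      ∃ (A : Fin k → Set X) (μs : Fin k → Measure X),
        (∀ i, MeasurableSet (A i)) ∧ Pairwise (Function.onFun Disjoint A) ∧
        (∀ i, μs i ∈ U) ∧ (∀ i, ε' ≤ μs i (A i)) ∧
        ∀ i j, i ≠ j → μs i (A j) ≤ δ :=
  stmt12_general U hprob ε δ hδ1 N hfrag
end

section
/- Let U be a family of probability measures on X, ε ∈ (0,1], and suppose the ε-fragmentation number N_U(ε) is infinite (for every k there exist k pairwise disjoint measurable sets each with envelope mass ≥ ε). Then there exist pairwise disjoint measurable sets (A_i)_{i≥1} and measures (μ_i)_{i≥1} in U such that μ_i(A_i) ≥ ε/2 for all i ≥ 1, and for every n ≥ 1 and all distinct i, j with 2^n ≤ i, j < 2^{n+1}, μ_i(A_j) ≤ 2^{−n}. -/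
/-!
Every block is cut out of one large disjoint family given by the fragmentation hypothesis, with
near-optimal witnesses `ν j`. By Markov's inequality a probability measure gives mass `> 1/c` to
at most `c` sets of a disjoint family, so the relation "`ν i` charges `B j`" has out-degrees at
most `c`, and a greedy Turán-type argument finds a large family free of it. The same bound makes
a new block almost invisible (mass `≤ η j`) to the finitely many measures of earlier blocks.
Blocks of different stages need not be disjoint, so each set is finally pruned of all sets of
later blocks, at a cost of at most `∑ η j` for its own measure.
-/

open MeasureTheory ENNReal Function

open Finset in
theorem exists_pairwise_not_rel_of_card_filter_rel_le {ι : Type*} [DecidableEq ι]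
    (r : ι → ι → Prop) [DecidableRel r] {d m : ℕ} {S : Finset ι}
    (hdeg : ∀ i ∈ S, #{j ∈ S | r i j} ≤ d) (hS : (2 * d + 1) * m ≤ #S) :
    ∃ T ⊆ S, #T = m ∧ (T : Set ι).Pairwise fun i j => ¬ r i j := by
  induction m generalizing S with
  | zero => exact ⟨∅, empty_subset S, rfl, by simp⟩
  | succ m ih =>
    have hne : S.Nonempty := card_pos.1 (by nlinarith)
    have hin : ∑ v ∈ S, #{u ∈ S | r u v} = ∑ v ∈ S, #{u ∈ S | r v u} :=
      (sum_card_bipartiteAbove_eq_sum_card_bipartiteBelow r).symm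
    obtain ⟨v, hvS, hv⟩ : ∃ v ∈ S, #{u ∈ S | r v u ∨ r u v} ≤ 2 * d := by
      refine exists_le_of_sum_le hne ?_
      calc ∑ v ∈ S, #{u ∈ S | r v u ∨ r u v}
          ≤ ∑ v ∈ S, (#{u ∈ S | r v u} + #{u ∈ S | r u v}) :=
            sum_le_sum fun v _ => filter_or (r v ·) (r · v) S ▸ card_union_le _ _
        _ = 2 * ∑ v ∈ S, #{u ∈ S | r v u} := by rw [sum_add_distrib, hin, two_mul]
        _ ≤ 2 * ∑ _v ∈ S, d := Nat.mul_le_mul_left 2 (sum_le_sum hdeg)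
        _ = ∑ _v ∈ S, 2 * d := by rw [mul_sum]
    set N := insert v {u ∈ S | r v u ∨ r u v}
    have hN : #N ≤ 2 * d + 1 := (card_insert_le _ _).trans (by omega)
    obtain ⟨T, hTS, hTm, hT⟩ := ih (S := S \ N)
      (fun i hi => (card_le_card (filter_subset_filter _ sdiff_subset)).trans
        (hdeg i (mem_sdiff.1 hi).1))
      (by have := le_card_sdiff N S; rw [mul_add_one] at hS; omega)
    have hvT : v ∉ T := fun h => (mem_sdiff.1 (hTS h)).2 (mem_insert_self _ _)
    refine ⟨insert v T, insert_subset hvS (hTS.trans sdiff_subset),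
      by rw [card_insert_of_notMem hvT, hTm], ?_⟩
    rw [coe_insert, Set.pairwise_insert]
    refine ⟨hT, fun u hu _ => ?_⟩
    have hu' := mem_sdiff.1 (hTS hu)
    have : ¬ (r v u ∨ r u v) := fun h => hu'.2 (mem_insert_of_mem (mem_filter.2 ⟨hu'.1, h⟩))
    tauto

section

variable {X : Type*} [MeasurableSpace X]

open Finset in
theorem card_filter_inv_lt_measure_le (μ : Measure X) [IsProbabilityMeasure μ] {ι : Type*}
    [Fintype ι] {B : ι → Set X} (hB : ∀ i, MeasurableSet (B i))
    (hdisj : Pairwise (Disjoint on B)) (c : ℕ) :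
    #{j | (c : ℝ≥0∞)⁻¹ < μ (B j)} ≤ c := by
  set T : Finset ι := {j | (c : ℝ≥0∞)⁻¹ < μ (B j)}
  have hmass : #T * (c : ℝ≥0∞)⁻¹ ≤ 1 :=
    calc #T * (c : ℝ≥0∞)⁻¹ ≤ ∑ j ∈ T, μ (B j) := by
          rw [← nsmul_eq_mul]
          exact card_nsmul_le_sum _ _ _ fun j hj => (mem_filter.1 hj).2.le
      _ ≤ μ Set.univ := sum_measure_le_measure_univ (fun i _ => (hB i).nullMeasurableSet)
          fun i _ j _ hij => (hdisj hij).aedisjoint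
      _ = 1 := measure_univ
  rw [← div_eq_mul_inv, ENNReal.div_le_iff_le_mul (Or.inr one_ne_top) (Or.inl (natCast_ne_top c)),
    one_mul] at hmass
  exact_mod_cast hmass

def HasInfiniteFragmentation (U : Set (Measure X)) (ε : ℝ≥0∞) : Prop :=
  ∀ k : ℕ, ∃ B : Fin k → Set X, (∀ i, MeasurableSet (B i)) ∧
    Pairwise (Disjoint on B) ∧ ∀ i, ε ≤ ⨆ μ ∈ U, μ (B i)

open Finset in
theorem HasInfiniteFragmentation.exists_block {U : Set (Measure X)}
    (hprob : ∀ μ ∈ U, IsProbabilityMeasure μ) {ε e : ℝ≥0∞} (hfrag : HasInfiniteFragmentation U ε)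
    (he : e < ε) {δ η : ℝ≥0∞} (hδ : δ ≠ 0) (hη : η ≠ 0) (G : Finset U) (ι : Type*) [Fintype ι] :
    ∃ (C : ι → Set X) (ν : ι → U), (∀ i, MeasurableSet (C i)) ∧ Pairwise (Disjoint on C) ∧
      (∀ i, e < (ν i : Measure X) (C i)) ∧ (∀ i j, i ≠ j → (ν i : Measure X) (C j) ≤ δ) ∧
      ∀ g ∈ G, ∀ i, (g : Measure X) (C i) ≤ η := by
  obtain ⟨c, hc⟩ := exists_inv_nat_lt hδ
  obtain ⟨c', hc'⟩ := exists_inv_nat_lt hη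
  set m := Fintype.card ι
  obtain ⟨B, hBm, hBd, hBε⟩ := hfrag ((2 * c + 1) * m + #G * c')
  choose ν hν using fun j => (lt_biSup_iff.1 (he.trans_le (hBε j)))
  set ν' : Fin _ → U := fun j => ⟨ν j, (hν j).1⟩
  set Bad := G.biUnion fun g => {j | (c' : ℝ≥0∞)⁻¹ < (g : Measure X) (B j)}
  have hBad : #Bad ≤ #G * c' :=
    card_biUnion_le.trans <| sum_le_card_nsmul _ _ _ fun g _ =>
      haveI := hprob g g.2
      card_filter_inv_lt_measure_le (g : Measure X) hBm hBd c'
  obtain ⟨T, hT, hTm, hTind⟩ := exists_pairwise_not_rel_of_card_filter_rel_le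
    (fun i j => (c : ℝ≥0∞)⁻¹ < ν i (B j)) (d := c) (m := m) (S := univ \ Bad)
    (fun i _ => (card_le_card (filter_subset_filter _ (subset_univ _))).trans <|
      haveI := hprob _ (hν i).1
      card_filter_inv_lt_measure_le (ν i) hBm hBd c)
    (by have := le_card_sdiff Bad univ; simp only [card_univ, Fintype.card_fin] at this; omega)
  set σ : ι ≃ T := Fintype.equivOfCardEq (by rw [Fintype.card_coe, hTm])
  have hσ : Injective (Subtype.val ∘ σ) := Subtype.val_injective.comp σ.injective
  refine ⟨fun i => B (σ i), fun i => ν' (σ i), fun i => hBm _, fun i j hij => hBd (hσ.ne hij),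
    fun i => (hν _).2, fun i j hij => ?_, fun g hg i => ?_⟩
  · exact (not_lt.1 (hTind (σ i).2 (σ j).2 (hσ.ne hij))).trans hc.le
  · have hgood := (mem_sdiff.1 (hT (σ i).2)).2
    exact (not_lt.1 fun hlt =>
      hgood (mem_biUnion.2 ⟨g, hg, mem_filter.2 ⟨mem_univ _, hlt⟩⟩)).trans hc'.le

theorem exists_pairwise_disjoint_subsets_of_staged {ι β : Type*} [Countable ι] [LinearOrder β]
    (stage : ι → β) {C : ι → Set X} {ν : ι → Measure X} {η : ι → ℝ≥0∞}
    (hC : ∀ i, MeasurableSet (C i))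
    (hdisj : ∀ i j, stage i = stage j → i ≠ j → Disjoint (C i) (C j))
    (hsmall : ∀ i j, stage i < stage j → ν i (C j) ≤ η j) :
    ∃ A : ι → Set X, (∀ i, MeasurableSet (A i)) ∧ Pairwise (Disjoint on A) ∧
      (∀ i, A i ⊆ C i) ∧ ∀ i, ν i (C i) ≤ ν i (A i) + ∑' j, η j := by
  set L : ι → Set X := fun i => ⋃ j ∈ {j | stage i < stage j}, C j
  have hL : ∀ i j, stage i < stage j → C j ⊆ L i := fun i j h =>
    Set.subset_biUnion_of_mem (u := C) h
  refine ⟨fun i => C i \ L i,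
    fun i => (hC i).diff (.biUnion (Set.to_countable _) fun j _ => hC j), fun i j hij => ?_,
    fun i => Set.sdiff_subset, fun i => ?_⟩
  · rcases lt_trichotomy (stage i) (stage j) with h | h | h
    · exact Set.disjoint_sdiff_left.mono_right (Set.sdiff_subset.trans (hL i j h))
    · exact (hdisj i j h hij).mono Set.sdiff_subset Set.sdiff_subset
    · exact (Set.disjoint_sdiff_left.mono_right (Set.sdiff_subset.trans (hL j i h))).symm
  · calc ν i (C i) ≤ ν i (C i \ L i ∪ L i) := measure_mono (Set.subset_sdiff_union _ _)
      _ ≤ ν i (C i \ L i) + ν i (L i) := measure_union_le _ _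
      _ ≤ ν i (C i \ L i) + ∑' j, η j := by
        gcongr
        calc ν i (L i) ≤ ∑' j : {j | stage i < stage j}, ν i (C j) :=
              measure_biUnion_le _ (Set.to_countable _) _
          _ ≤ ∑' j : {j | stage i < stage j}, η j := ENNReal.tsum_le_tsum fun j => hsmall i j j.2
          _ ≤ ∑' j, η j := ENNReal.tsum_comp_le_tsum_of_injective Subtype.val_injective _

def dyadicBlock (n : ℕ) : Finset ℕ := {i ∈ Finset.range (2 ^ (n + 1)) | Nat.log 2 i = n}

theorem mem_dyadicBlock {n i : ℕ} : i ∈ dyadicBlock n ↔ Nat.log 2 i = n := by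
  simp only [dyadicBlock, Finset.mem_filter, Finset.mem_range, and_iff_right_iff_imp]
  rintro rfl
  exact Nat.lt_pow_succ_log_self one_lt_two i

theorem HasInfiniteFragmentation.exists_staged_family {U : Set (Measure X)}
    (hprob : ∀ μ ∈ U, IsProbabilityMeasure μ) {ε e : ℝ≥0∞} (hfrag : HasInfiniteFragmentation U ε)
    (he : e < ε) {η : ℕ → ℝ≥0∞} (hη : ∀ j, 0 < η j) :
    ∃ (C : ℕ → Set X) (ν : ℕ → Measure X), (∀ i, MeasurableSet (C i)) ∧ (∀ i, ν i ∈ U) ∧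
      (∀ i, e < ν i (C i)) ∧
      (∀ i j, Nat.log 2 i = Nat.log 2 j → i ≠ j →
        Disjoint (C i) (C j) ∧ ν i (C j) ≤ (2 ^ Nat.log 2 i)⁻¹) ∧
      ∀ i j, Nat.log 2 i < Nat.log 2 j → ν i (C j) ≤ η j := by
  classical
  choose C ν hCm hCd hCe hCδ hCη using fun n (G : Finset U) =>
    hfrag.exists_block hprob he (δ := (2 ^ n)⁻¹) (η := (dyadicBlock n).inf η)
      (ENNReal.inv_ne_zero.2 (pow_ne_top ofNat_ne_top))
      ((Finset.lt_inf_iff zero_lt_top).2 fun j _ => hη j).ne' G (dyadicBlock n)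
  -- `M n` collects the witnessing measures of the blocks before the `n`-th one.
  let M : ℕ → Finset U := fun n => Nat.rec ∅ (fun n Mn => Mn ∪ Finset.univ.image (ν n Mn)) n
  have hM : Monotone M := monotone_nat_of_le_succ fun n => Finset.subset_union_left
  have hblock : ∀ i, i ∈ dyadicBlock (Nat.log 2 i) := fun i => mem_dyadicBlock.2 rfl
  let C' i := C (Nat.log 2 i) (M (Nat.log 2 i)) ⟨i, hblock i⟩
  let ν' i := ν (Nat.log 2 i) (M (Nat.log 2 i)) ⟨i, hblock i⟩
  have hC' : ∀ n i (h : i ∈ dyadicBlock n), C' i = C n (M n) ⟨i, h⟩ := by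
    intro n i h
    obtain rfl := mem_dyadicBlock.1 h
    rfl
  have hν'M : ∀ i n, Nat.log 2 i < n → ν' i ∈ M n := fun i n h =>
    hM h (Finset.mem_union_right _ (Finset.mem_image_of_mem _ (Finset.mem_univ _)))
  refine ⟨C', fun i => ν' i, fun i => hCm _ _ _, fun i => (ν' i).2, fun i => hCe _ _ _,
    fun i j hij hne => ?_, fun i j hij => ?_⟩
  · rw [hC' _ j (mem_dyadicBlock.2 hij.symm)]
    exact ⟨hCd _ _ (Subtype.coe_ne_coe.1 hne), hCδ _ _ _ _ (Subtype.coe_ne_coe.1 hne)⟩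
  · exact (hCη _ _ _ (hν'M i _ hij) _).trans (Finset.inf_le (hblock j))

end

theorem stmt16_general {X : Type*} [MeasurableSpace X] (U : Set (Measure X))
    (hprob : ∀ μ ∈ U, IsProbabilityMeasure μ)
    (ε : ℝ≥0∞) (hε : 0 < ε) (hε1 : ε ≤ 1)
    (hfrag : ∀ k : ℕ, ∃ B : Fin k → Set X, (∀ i, MeasurableSet (B i)) ∧
      Pairwise (Function.onFun Disjoint B) ∧ ∀ i, ε ≤ ⨆ μ ∈ U, μ (B i)) :
    ∃ (A : ℕ → Set X) (μs : ℕ → Measure X),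
      (∀ i, MeasurableSet (A i)) ∧ Pairwise (Function.onFun Disjoint A) ∧
      (∀ i, μs i ∈ U) ∧ (∀ i, ε / 2 ≤ μs i (A i)) ∧
      ∀ n : ℕ, 1 ≤ n → ∀ i j : ℕ, 2 ^ n ≤ i → i < 2 ^ (n + 1) →
        2 ^ n ≤ j → j < 2 ^ (n + 1) → i ≠ j →
        μs i (A j) ≤ ((2 : ℝ≥0∞) ^ n)⁻¹ := by
  obtain ⟨e, hεe, he⟩ :=
    exists_between (ENNReal.half_lt_self hε.ne' (ne_top_of_le_ne_top one_ne_top hε1))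
  -- the losses `η j` from pruning later blocks must fit into the slack `e - ε / 2`
  obtain ⟨η, hη, hηe⟩ := ENNReal.exists_pos_sum_of_countable' (tsub_pos_of_lt hεe).ne' ℕ
  obtain ⟨C, ν, hCm, hνU, hCe, hblock, hsmall⟩ :=
    HasInfiniteFragmentation.exists_staged_family hprob hfrag he hη
  obtain ⟨A, hAm, hAd, hAC, hCA⟩ := exists_pairwise_disjoint_subsets_of_staged (Nat.log 2) hCm
    (fun i j h hij => (hblock i j h hij).1) hsmall
  refine ⟨A, ν, hAm, hAd, hνU, fun i => ?_, fun n _ i j hi hi' hj hj' hij => ?_⟩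
  · refine (lt_of_add_lt_add_right (a := ∑' j, η j) ?_).le
    calc ε / 2 + ∑' j, η j < ε / 2 + (e - ε / 2) := ENNReal.add_lt_add_left hεe.ne_top hηe
      _ = e := add_tsub_cancel_of_le hεe.le
      _ < ν i (C i) := hCe i
      _ ≤ ν i (A i) + ∑' j, η j := hCA i
  · have hin : Nat.log 2 i = n := Nat.log_eq_of_pow_le_of_lt_pow hi hi'
    have hjn : Nat.log 2 j = n := Nat.log_eq_of_pow_le_of_lt_pow hj hj'
    calc ν i (A j) ≤ ν i (C j) := measure_mono (hAC j)
      _ ≤ (2 ^ n)⁻¹ := hin ▸ (hblock i j (hin.trans hjn.symm) hij).2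

theorem stmt16 {X : Type*} [MeasurableSpace X] (U : Set (Measure X)) (hU : U.Nonempty)
    (hprob : ∀ μ ∈ U, IsProbabilityMeasure μ)
    (ε : ℝ≥0∞) (hε : 0 < ε) (hε1 : ε ≤ 1)
    (hfrag : ∀ k : ℕ, ∃ B : Fin k → Set X, (∀ i, MeasurableSet (B i)) ∧
      Pairwise (Function.onFun Disjoint B) ∧ ∀ i, ε ≤ ⨆ μ ∈ U, μ (B i)) :
    ∃ (A : ℕ → Set X) (μs : ℕ → Measure X),
      (∀ i, MeasurableSet (A i)) ∧ Pairwise (Function.onFun Disjoint A) ∧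
      (∀ i, μs i ∈ U) ∧ (∀ i, ε / 2 ≤ μs i (A i)) ∧
      ∀ n : ℕ, 1 ≤ n → ∀ i j : ℕ, 2 ^ n ≤ i → i < 2 ^ (n + 1) →
        2 ^ n ≤ j → j < 2 ^ (n + 1) → i ≠ j →
        μs i (A j) ≤ ((2 : ℝ≥0∞) ^ n)⁻¹ :=
  stmt16_general U hprob ε hε hε1 hfrag
end

section
/- Let μ₀ be a probability measure on X, ρ : [0,1] → ℝ≥0 non-decreasing with ρ(t)/t non-increasing on (0,1], and let U be a (μ₀, ρ)-generalized smooth family. Fix ε ∈ (0,1] and set η := ρ(ε)/ε. Then for every μ ∈ U (with μ ≪ μ₀), the mass that μ places on the superlevel set of its density exceeding η is at most ρ(ε): μ({ x : dμ/dμ₀(x) > η }) ≤ ρ(ε). -/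
open MeasureTheory Set Filter ENNReal

/-!
On `A = {dμ/dμ₀ > η}` with `η = ρ ε / ε` we have `η μ₀(A) < μ(A) ≤ ρ(μ₀ A)` as soon as `μ₀ A > 0`.
If `μ₀ A > ε`, the monotonicity of `ρ t / t` gives `ρ(μ₀ A) ≤ η μ₀(A)`, a contradiction;
hence `μ₀ A ≤ ε` and `μ A ≤ ρ(μ₀ A) ≤ ρ ε`.
-/

theorem mul_measure_lt_of_forall_lt_rnDeriv {X : Type*} [MeasurableSpace X] {μ ν : Measure X}
    {s : Set X} {c : ℝ≥0∞} (hs : MeasurableSet s) (hc : ∀ x ∈ s, c < μ.rnDeriv ν x)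
    (hν₀ : ν s ≠ 0) (hν_top : ν s ≠ ∞) : c * ν s < μ s := by
  obtain ⟨x, hx⟩ := nonempty_of_measure_ne_zero hν₀
  have hc_top : c * ν s ≠ ∞ := mul_ne_top (hc x hx).ne_top hν_top
  calc c * ν s = ∫⁻ _ in s, c ∂ν := (setLIntegral_const s c).symm
    _ < ∫⁻ x in s, μ.rnDeriv ν x ∂ν :=
      setLIntegral_strict_mono hs hν₀ (μ.measurable_rnDeriv ν)
        (by rwa [setLIntegral_const]) (ae_of_all _ hc)
    _ ≤ μ s := Measure.setLIntegral_rnDeriv_le s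

theorem stmt19_general {X : Type*} [MeasurableSpace X] (μ₀ : Measure X) [IsProbabilityMeasure μ₀]
    (U : Set (Measure X))
    (ρ : ℝ≥0∞ → ℝ≥0∞) (hmono : Monotone ρ)
    (hratio : ∀ s t : ℝ≥0∞, 0 < s → s ≤ t → t ≤ 1 → ρ t / t ≤ ρ s / s)
    (hsmooth : ∀ μ ∈ U, ∀ A : Set X, MeasurableSet A → μ A ≤ ρ (μ₀ A))
    (ε : ℝ≥0∞) (hε : 0 < ε) :
    ∀ μ ∈ U, μ ≪ μ₀ → μ {x | ρ ε / ε < μ.rnDeriv μ₀ x} ≤ ρ ε := by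
  intro μ hμU _
  set A := {x | ρ ε / ε < μ.rnDeriv μ₀ x}
  have hA : MeasurableSet A := measurableSet_lt measurable_const (μ.measurable_rnDeriv μ₀)
  suffices hAε : μ₀ A ≤ ε from (hsmooth μ hμU A hA).trans (hmono hAε)
  by_contra! hεA
  have hA₀ : μ₀ A ≠ 0 := (hε.trans hεA).ne'
  have hρA : ρ (μ₀ A) ≤ ρ ε / ε * μ₀ A :=
    (ENNReal.div_le_iff hA₀ (measure_ne_top _ _)).1 (hratio ε _ hε hεA.le prob_le_one)
  have hμA : ρ ε / ε * μ₀ A < μ A :=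
    mul_measure_lt_of_forall_lt_rnDeriv hA (fun _ hx ↦ hx) hA₀ (measure_ne_top _ _)
  exact (hsmooth μ hμU A hA |>.trans hρA).not_gt hμA

theorem stmt19 {X : Type*} [MeasurableSpace X] (μ₀ : Measure X) [IsProbabilityMeasure μ₀]
    (U : Set (Measure X)) (hprob : ∀ μ ∈ U, IsProbabilityMeasure μ)
    (ρ : ℝ≥0∞ → ℝ≥0∞) (hmono : Monotone ρ)
    (hratio : ∀ s t : ℝ≥0∞, 0 < s → s ≤ t → t ≤ 1 → ρ t / t ≤ ρ s / s)
    (hsmooth : ∀ μ ∈ U, ∀ A : Set X, MeasurableSet A → μ A ≤ ρ (μ₀ A))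
    (ε : ℝ≥0∞) (hε : 0 < ε) (hε1 : ε ≤ 1) :
    ∀ μ ∈ U, μ ≪ μ₀ → μ {x | ρ ε / ε < μ.rnDeriv μ₀ x} ≤ ρ ε :=
  stmt19_general μ₀ U ρ hmono hratio hsmooth ε hε
end
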